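/- arXiv:2306.02341 — 3 statements merged into one kernel-verified Lean document; each statement's English description precedes it below -/
import Mathlib

section
/- Let T > 0. There exists a constant C > 0 (depending only on T, d, ν_S, ν_I, γ, λ*, β*, c₀, C₀) such that for every integer n ≥ 1 (with ε = 1/n) and every solution (S, F, I) of the deterministic ε-system on [0,T] whose initial data are cell averages of (S̄₀, Ī₀) and which satisfies S(t,x) ≥ 0, I(t,x) ≥ 0, F(t,x) ≥ 0 and S(t,x) + I(t,x) > 0 for all (t,x), one has sup_{x ∈ D_ε} S(t,x) ≤ C and sup_{x ∈ D_ε} I(t,x) ≤ C for all t ∈ [0,T]. -/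
open MeasureTheory Set

abbrev Grid (d n : ℕ) := Fin d → ZMod n

/-- Discrete Laplacian on the grid of mesh `ε = 1/n` (the factor `(n:ℝ)^2` is `ε⁻²`). -/
noncomputable def discLap (d n : ℕ) (f : Grid d n → ℝ) (x : Grid d n) : ℝ :=
  (n : ℝ) ^ 2 * ∑ i : Fin d,
    (f (Function.update x i (x i + 1)) - 2 * f x + f (Function.update x i (x i - 1)))

/-- Matrix of the discrete Laplacian. -/
noncomputable def lapMat (d n : ℕ) [NeZero n] : Matrix (Grid d n) (Grid d n) ℝ :=
  Matrix.of fun x y => discLap d n (fun z => if z = y then 1 else 0) x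

/-- `heatKer d n ν s t y x = (e^{(t-s) ν Δ_ε})_{y,x}`. -/
noncomputable def heatKer (d n : ℕ) [NeZero n] (ν s t : ℝ) (y x : Grid d n) : ℝ :=
  NormedSpace.exp ((t - s) • ν • lapMat d n) y x

/-- The half-open cube of side `1/n` based at grid point `x`, as a subset of `ℝ^d`. -/
noncomputable def cell (d n : ℕ) (x : Grid d n) : Set (Fin d → ℝ) :=
  Set.univ.pi fun i => Set.Ico (((x i).val : ℝ) / n) ((((x i).val : ℝ) + 1) / n)

/-- Cell average `ε^{-d} ∫_{V_ε(x)} f(y) dy`. -/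
noncomputable def cellAvg (d n : ℕ) (f : (Fin d → ℝ) → ℝ) (x : Grid d n) : ℝ :=
  (n : ℝ) ^ d * ∫ y in cell d n x, f y

/-- The force of infection `Γ(t,x) = B(t,x)^{-γ} Σ_y β_ε^{x,y}(t) F(t,y)`. -/
noncomputable def gam (d n : ℕ) [NeZero n] (γ : ℝ) (βe : ℝ → Grid d n → Grid d n → ℝ)
    (S I F : ℝ → Grid d n → ℝ) (t : ℝ) (x : Grid d n) : ℝ :=
  (S t x + I t x) ^ (-γ) * ∑ y, βe t x y * F t y

/-- `(S,F,I)` solves the deterministic `ε`-system on `[0,T]`. -/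
noncomputable def IsSolution (d n : ℕ) [NeZero n] (νS νI γ : ℝ) (lam lam0 : ℝ → ℝ)
    (βe : ℝ → Grid d n → Grid d n → ℝ) (T : ℝ) (S F I : ℝ → Grid d n → ℝ) : Prop :=
  (∀ x, ContinuousOn (fun t => S t x) (Icc 0 T)) ∧
  (∀ x, ContinuousOn (fun t => F t x) (Icc 0 T)) ∧
  (∀ x, ContinuousOn (fun t => I t x) (Icc 0 T)) ∧
  (∀ t ∈ Icc (0:ℝ) T, ∀ x,
    S t x = S 0 x - (∫ s in (0:ℝ)..t, S s x * gam d n γ βe S I F s x)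
      + νS * ∫ s in (0:ℝ)..t, discLap d n (S s) x) ∧
  (∀ t ∈ Icc (0:ℝ) T, ∀ x,
    F t x = lam0 t * (∑ y, I 0 y * heatKer d n νI 0 t y x)
      + ∑ y, ∫ s in (0:ℝ)..t,
          lam (t - s) * (S s y * gam d n γ βe S I F s y) * heatKer d n νI s t y x) ∧
  (∀ t ∈ Icc (0:ℝ) T, ∀ x,
    I t x = I 0 x + (∫ s in (0:ℝ)..t, S s x * gam d n γ βe S I F s x)
      + νI * ∫ s in (0:ℝ)..t, discLap d n (I s) x)

/-!
`S` is a subsolution of the discrete heat equation, so the discrete maximum principle gives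
`S ≤ C₀`. Since `S ≤ S + I` and `γ ≤ 1`, the infection rate satisfies
`S Γ ≤ β* max(1, C₀) ‖F(t)‖_∞`. The heat semigroup `e^{tν_IΔ_ε}` is a Markov kernel (entrywise
nonnegative, unit column sums), so Duhamel's formula for `F` gives
`‖F(t)‖_∞ ≤ λ* C₀ + λ* β* max(1, C₀) ∫₀ᵗ ‖F‖_∞`, and Grönwall bounds `‖F‖_∞`. The maximum principle
for `I`, whose source is now bounded, bounds `I`. None of these constants involves `ε`.

The maximum principle is proved at the first time `t₁` at which `u` touches a barrier
`A + δ + G t`: at the touching point the gap to the barrier satisfies a backward Grönwall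
inequality on `[0, t₁]`, so it vanishes at time `0`, contradicting `u(0) ≤ A`.
-/

theorem Function.update_add_eq_add_single {ι G : Type*} [DecidableEq ι] [AddGroup G]
    (x : ι → G) (i : ι) (a : G) : Function.update x i (x i + a) = x + Pi.single i a := by
  ext j
  rcases eq_or_ne j i with rfl | hj <;> simp [*]

theorem Function.update_sub_eq_sub_single {ι G : Type*} [DecidableEq ι] [AddGroup G]
    (x : ι → G) (i : ι) (a : G) : Function.update x i (x i - a) = x - Pi.single i a := by
  ext j
  rcases eq_or_ne j i with rfl | hj <;> simp [*]

theorem mul_rpow_neg_le_max_one {s b γ : ℝ} (hs : 0 ≤ s) (hsb : s ≤ b) (hγ : γ ∈ Icc (0 : ℝ) 1) :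
    s * b ^ (-γ) ≤ max 1 s := by
  rcases hs.eq_or_lt with rfl | hs
  · simp
  calc s * b ^ (-γ) ≤ s * s ^ (-γ) :=
        mul_le_mul_of_nonneg_left (Real.rpow_le_rpow_of_nonpos hs hsb (neg_nonpos.2 hγ.1)) hs.le
    _ = s ^ (1 - γ) := by rw [sub_eq_add_neg, Real.rpow_add hs, Real.rpow_one]
    _ ≤ max 1 s ^ (1 - γ) := by gcongr <;> linarith [hγ.2, le_max_right 1 s]
    _ ≤ max 1 s ^ (1 : ℝ) :=
        Real.rpow_le_rpow_of_exponent_le (le_max_left 1 s) (by linarith [hγ.1])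
    _ = max 1 s := Real.rpow_one _

theorem exists_forall_le_of_continuousOn {X : Type*} [Fintype X] {u : ℝ → X → ℝ} {s : Set ℝ}
    (hs : IsCompact s) (hu : ∀ x, ContinuousOn (fun t => u t x) s) :
    ∃ M, ∀ t ∈ s, ∀ x, u t x ≤ M := by
  obtain ⟨M, hM⟩ := hs.exists_bound_of_continuousOn (continuousOn_pi.2 hu)
  exact ⟨M, fun t ht x =>
    (le_abs_self _).trans ((norm_le_pi_norm (u t) x).trans (hM t ht))⟩

theorem intervalIntegral.integral_mono_on_of_nonneg {f g : ℝ → ℝ} {a b : ℝ} (hab : a ≤ b)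
    (hf : ∀ x ∈ Icc a b, 0 ≤ f x) (hfg : ∀ x ∈ Icc a b, f x ≤ g x)
    (hg : IntervalIntegrable g volume a b) : ∫ x in a..b, f x ≤ ∫ x in a..b, g x := by
  rw [intervalIntegral.integral_of_le hab, intervalIntegral.integral_of_le hab]
  exact setIntegral_mono_of_nonneg (fun x hx => hf x (Ioc_subset_Icc_self hx))
    (fun x hx => hfg x (Ioc_subset_Icc_self hx)) hg.1

theorem sub_eq_integral_add_integral {u g l : ℝ → ℝ} {T s t : ℝ}
    (hg : IntervalIntegrable g volume 0 T) (hl : IntervalIntegrable l volume 0 T)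
    (heq : ∀ t ∈ Icc 0 T, u t = u 0 + (∫ r in 0..t, g r) + ∫ r in 0..t, l r)
    (hs : s ∈ Icc 0 T) (ht : t ∈ Icc 0 T) :
    u t - u s = (∫ r in s..t, g r) + ∫ r in s..t, l r := by
  have hT : 0 ≤ T := hs.1.trans hs.2
  have hsub : ∀ {a}, a ∈ Icc 0 T → uIcc 0 a ⊆ uIcc 0 T := fun ha => by
    rw [uIcc_of_le hT]; exact uIcc_subset_Icc (left_mem_Icc.2 hT) ha
  rw [← intervalIntegral.integral_interval_sub_left (hg.mono_set (hsub ht)) (hg.mono_set (hsub hs)),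
    ← intervalIntegral.integral_interval_sub_left (hl.mono_set (hsub ht)) (hl.mono_set (hsub hs)),
    heq t ht, heq s hs]
  ring

theorem le_mul_exp_of_le_add_mul_integral {f : ℝ → ℝ} {a K T : ℝ}
    (hf : ContinuousOn f (Icc 0 T)) (hK : 0 ≤ K)
    (h : ∀ t ∈ Icc 0 T, f t ≤ a + K * ∫ s in 0..t, f s) :
    ∀ t ∈ Icc 0 T, f t ≤ a * Real.exp (K * t) := by
  intro t ht
  have hT : 0 ≤ T := ht.1.trans ht.2
  set Φ : ℝ → ℝ := fun t => Real.exp (-(K * t)) * (a + K * ∫ s in 0..t, f s)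
  have hprim : ContinuousOn (fun t => ∫ s in 0..t, f s) (Icc 0 T) := by
    have := intervalIntegral.continuousOn_primitive_interval (μ := volume)
      (a := 0) (b := T) (f := f) (by rw [uIcc_of_le hT]; exact hf.integrableOn_Icc)
    rwa [uIcc_of_le hT] at this
  have hderiv : ∀ t ∈ Ioo 0 T, HasDerivAt Φ
      (K * Real.exp (-(K * t)) * (f t - (a + K * ∫ s in 0..t, f s))) t := by
    intro t ht
    have hF : HasDerivAt (fun t => ∫ s in 0..t, f s) (f t) t :=
      intervalIntegral.integral_hasDerivAt_right
        ((hf.mono (Icc_subset_Icc_right ht.2.le)).intervalIntegrable_of_Icc ht.1.le)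
        (hf.mono Ioo_subset_Icc_self |>.stronglyMeasurableAtFilter isOpen_Ioo t ht)
        (hf.continuousAt (Icc_mem_nhds ht.1 ht.2))
    have hE := ((hasDerivAt_id t).const_mul K).neg.exp
    exact (hE.mul ((hF.const_mul K).const_add a)).congr_deriv
      (by simp only [id, Pi.neg_apply]; ring)
  have hanti : AntitoneOn Φ (Icc 0 T) := by
    refine antitoneOn_of_deriv_nonpos (convex_Icc 0 T)
      ((Real.continuous_exp.comp_continuousOn (by fun_prop)).mul (continuousOn_const.add
        (continuousOn_const.mul hprim))) ?_ ?_ <;> rw [interior_Icc]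
    · exact fun t ht => (hderiv t ht).differentiableAt.differentiableWithinAt
    · intro t ht
      rw [(hderiv t ht).deriv]
      have := h t (Ioo_subset_Icc_self ht)
      exact mul_nonpos_of_nonneg_of_nonpos (by positivity) (by linarith)
  have hΦ : Φ t ≤ a := by
    simpa [Φ] using hanti (left_mem_Icc.2 hT) ht ht.1
  calc f t ≤ a + K * ∫ s in 0..t, f s := h t ht
    _ = Real.exp (K * t) * Φ t := by simp [Φ, ← mul_assoc, ← Real.exp_add]
    _ ≤ a * Real.exp (K * t) := by rw [mul_comm a]; gcongr

theorem nonpos_of_le_mul_integral_right {f : ℝ → ℝ} {K T : ℝ}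
    (hf : ContinuousOn f (Icc 0 T)) (hK : 0 ≤ K)
    (h : ∀ s ∈ Icc 0 T, f s ≤ K * ∫ r in s..T, f r) : ∀ s ∈ Icc 0 T, f s ≤ 0 := by
  have hreflect : ∀ σ ∈ Icc 0 T, f (T - σ) ≤ 0 + K * ∫ τ in 0..σ, f (T - τ) := by
    intro σ hσ
    rw [intervalIntegral.integral_comp_sub_left f T, sub_zero, zero_add]
    exact h (T - σ) ⟨by linarith [hσ.2], by linarith [hσ.1]⟩
  intro s hs
  simpa using le_mul_exp_of_le_add_mul_integral
    (hf.comp (by fun_prop) fun σ hσ => ⟨by linarith [hσ.2], by linarith [hσ.1]⟩) hK hreflect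
    (T - s) ⟨by linarith [hs.2], by linarith [hs.1]⟩

theorem exists_first_hit {χ : ℝ → ℝ} {T c t : ℝ} (hχ : ContinuousOn χ (Icc 0 T))
    (h0 : χ 0 < c) (ht : t ∈ Icc 0 T) (hct : c ≤ χ t) :
    ∃ t₁ ∈ Icc 0 T, χ t₁ = c ∧ ∀ r ∈ Icc 0 t₁, χ r ≤ c := by
  set B := Icc 0 t ∩ χ ⁻¹' Ici c
  have hBbdd : BddBelow B := ⟨0, fun r hr => hr.1.1⟩
  have hinf : sInf B ∈ B :=
    ((hχ.mono (Icc_subset_Icc_right ht.2)).preimage_isClosed_of_isClosed isClosed_Icc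
      isClosed_Ici).csInf_mem ⟨t, right_mem_Icc.2 ht.1, hct⟩ hBbdd
  have hbefore : ∀ r ∈ Ico 0 (sInf B), χ r < c := fun r hr => not_le.1 fun hcr =>
    (csInf_le hBbdd ⟨⟨hr.1, hr.2.le.trans hinf.1.2⟩, hcr⟩).not_gt hr.2
  have hsub : Icc 0 (sInf B) ⊆ Icc 0 T := Icc_subset_Icc_right (hinf.1.2.trans ht.2)
  obtain ⟨r, hr, hχr⟩ := intermediate_value_Icc hinf.1.1 (hχ.mono hsub) ⟨h0.le, hinf.2⟩
  have hr_eq : r = sInf B := by_contra fun hne =>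
    (hbefore r ⟨hr.1, lt_of_le_of_ne hr.2 hne⟩).ne hχr
  refine ⟨r, hsub hr, hχr, fun s hs => ?_⟩
  rcases hs.2.lt_or_eq with hlt | rfl
  · exact (hbefore s ⟨hs.1, hr_eq ▸ hlt⟩).le
  · exact hχr.le

theorem exists_first_touch {X : Type*} [Fintype X] [Nonempty X] {u : ℝ → X → ℝ} {b : ℝ → ℝ}
    {T t : ℝ} {x : X} (hu : ∀ x, ContinuousOn (fun t => u t x) (Icc 0 T))
    (hb : ContinuousOn b (Icc 0 T)) (h0 : ∀ y, u 0 y < b 0) (ht : t ∈ Icc 0 T)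
    (hx : b t ≤ u t x) :
    ∃ t₁ ∈ Icc 0 T, ∃ x₁, u t₁ x₁ = b t₁ ∧ ∀ r ∈ Icc 0 t₁, ∀ y, u r y ≤ b r := by
  set χ : ℝ → ℝ := fun r => Finset.univ.sup' Finset.univ_nonempty (u r) - b r
  have hχ : ContinuousOn χ (Icc 0 T) :=
    (ContinuousOn.finset_sup'_apply _ fun y _ => hu y).sub hb
  have hχ0 : χ 0 < 0 :=
    sub_neg.2 ((Finset.sup'_lt_iff _).2 fun y _ => h0 y)
  have hχt : 0 ≤ χ t := sub_nonneg.2 (hx.trans (Finset.le_sup' (u t) (Finset.mem_univ x)))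
  obtain ⟨t₁, ht₁, hχt₁, hχle⟩ := exists_first_hit hχ hχ0 ht hχt
  obtain ⟨x₁, -, hx₁⟩ := Finset.exists_mem_eq_sup' Finset.univ_nonempty (u t₁)
  refine ⟨t₁, ht₁, x₁, by simp only [χ] at hχt₁; linarith, fun r hr y => ?_⟩
  have := Finset.le_sup' (u r) (Finset.mem_univ y)
  have := hχle r hr
  simp only [χ] at this
  linarith

/-- Maximum principle for `∂ₜu = g + L u` in integral form. -/
theorem le_add_mul_of_eq_integral {X : Type*} [Fintype X] [Nonempty X]
    {L : (X → ℝ) → X → ℝ} {K T A G : ℝ} (hK : 0 ≤ K)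
    (hL : ∀ f M x, (∀ y, f y ≤ M) → L f x ≤ K * (M - f x))
    {u g : ℝ → X → ℝ} (hu : ∀ x, ContinuousOn (fun t => u t x) (Icc 0 T))
    (hLu : ∀ x, ContinuousOn (fun t => L (u t) x) (Icc 0 T))
    (hg : ∀ x, IntervalIntegrable (fun s => g s x) volume 0 T)
    (heq : ∀ t ∈ Icc 0 T, ∀ x,
      u t x = u 0 x + (∫ s in 0..t, g s x) + ∫ s in 0..t, L (u s) x)
    (hgG : ∀ s ∈ Icc 0 T, ∀ x, g s x ≤ G) (hu0 : ∀ x, u 0 x ≤ A) :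
    ∀ t ∈ Icc 0 T, ∀ x, u t x ≤ A + G * t := by
  intro t ht x
  have hT : 0 ≤ T := ht.1.trans ht.2
  refine le_of_forall_pos_le_add fun δ hδ => not_lt.1 fun hlt => ?_
  obtain ⟨t₁, ht₁, x₁, htouch, hbarrier⟩ := exists_first_touch (b := fun r => A + δ + G * r)
    hu (by fun_prop) (fun y => by linarith [hu0 y]) ht (by linarith)
  have hsub : Icc 0 t₁ ⊆ Icc 0 T := Icc_subset_Icc_right ht₁.2
  set h : ℝ → ℝ := fun r => A + δ + G * r - u r x₁
  have hh : ContinuousOn h (Icc 0 t₁) := by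
    have := (hu x₁).mono hsub
    fun_prop
  have hgap : ∀ s ∈ Icc 0 t₁, h s ≤ K * ∫ r in s..t₁, h r := by
    intro s hs
    have hst : Icc s t₁ ⊆ Icc 0 T := (Icc_subset_Icc_left hs.1).trans hsub
    have hdiff := sub_eq_integral_add_integral (hg x₁)
      ((hLu x₁).intervalIntegrable_of_Icc hT) (heq · · x₁) (hsub hs) ht₁
    have hgint : ∫ r in s..t₁, g r x₁ ≤ G * (t₁ - s) := by
      simpa [mul_comm] using intervalIntegral.integral_mono_on hs.2
        ((hg x₁).mono_set (by rw [uIcc_of_le hT, uIcc_of_le hs.2]; exact hst))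
        intervalIntegrable_const fun r hr => hgG r (hst hr) x₁
    have hLint : ∫ r in s..t₁, L (u r) x₁ ≤ K * ∫ r in s..t₁, h r := by
      rw [← intervalIntegral.integral_const_mul]
      exact intervalIntegral.integral_mono_on hs.2
        (((hLu x₁).mono hst).intervalIntegrable_of_Icc hs.2)
        (((hh.mono (Icc_subset_Icc_left hs.1)).intervalIntegrable_of_Icc hs.2).const_mul K)
        fun r hr => hL _ _ x₁ (hbarrier r ⟨hs.1.trans hr.1, hr.2⟩)
    simp only [h]
    linarith
  have := nonpos_of_le_mul_integral_right hh hK hgap 0 (left_mem_Icc.2 ht₁.1)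
  simp only [h] at this
  linarith [hu0 x₁]

open scoped Nat

namespace Matrix

variable {X : Type*} [Fintype X] [DecidableEq X]

theorem hasSum_exp_apply (A : Matrix X X ℝ) (i j : X) :
    HasSum (fun k : ℕ => (k ! : ℝ)⁻¹ * (A ^ k) i j) (NormedSpace.exp A i j) := by
  open scoped Norms.Operator in
  exact Pi.hasSum.mp (Pi.hasSum.mp (NormedSpace.exp_series_hasSum_exp' (𝕂 := ℝ) A) i) j

theorem continuous_exp : Continuous (NormedSpace.exp : Matrix X X ℝ → Matrix X X ℝ) := by
  open scoped Norms.Operator in exact NormedSpace.exp_continuous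

theorem exp_smul_one (c : ℝ) :
    NormedSpace.exp (c • (1 : Matrix X X ℝ)) = Real.exp c • 1 := by
  rw [smul_one_eq_diagonal, exp_diagonal, smul_one_eq_diagonal, Real.exp_eq_exp_ℝ, Pi.exp_def]

theorem exp_apply_nonneg_of_nonneg {A : Matrix X X ℝ} (hA : ∀ i j, 0 ≤ A i j) (i j : X) :
    0 ≤ NormedSpace.exp A i j :=
  (hasSum_exp_apply A i j).nonneg fun k => mul_nonneg (by positivity) (pow_apply_nonneg hA k i j)

/-- A scalar shift makes every entry nonnegative and only rescales the exponential. -/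
theorem exp_apply_nonneg {A : Matrix X X ℝ} (hA : Pairwise fun i j => 0 ≤ A i j) (i j : X) :
    0 ≤ NormedSpace.exp A i j := by
  obtain ⟨c, hc⟩ : ∃ c : ℝ, ∀ i, 0 ≤ A i i + c :=
    ⟨∑ i, |A i i|, fun i => by
      have := Finset.single_le_sum (fun k _ => abs_nonneg (A k k)) (Finset.mem_univ i)
      linarith [neg_abs_le (A i i)]⟩
  have hshift : ∀ i j, 0 ≤ (A + c • 1) i j := fun i j => by
    rcases eq_or_ne i j with rfl | hij
    · simpa using hc i
    · simpa [one_apply_ne hij] using hA hij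
  have hsplit : NormedSpace.exp A = Real.exp (-c) • NormedSpace.exp (A + c • 1) := by
    rw [← smul_one_mul, ← exp_smul_one,
      ← exp_add_of_commute _ _ ((Commute.one_left _).smul_left _)]
    congr 1
    module
  rw [hsplit, smul_apply, smul_eq_mul]
  exact mul_nonneg (Real.exp_nonneg _) (exp_apply_nonneg_of_nonneg hshift i j)

theorem sum_exp_apply_left {A : Matrix X X ℝ} (hA : ∀ j, ∑ i, A i j = 0) (j : X) :
    ∑ i, NormedSpace.exp A i j = 1 := by
  have hpow : ∀ k, ∑ i, (A ^ (k + 1)) i j = 0 := fun k => by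
    simp_rw [pow_succ', mul_apply]
    rw [Finset.sum_comm]
    simp [← Finset.sum_mul, hA]
  have hser : (fun k : ℕ => ∑ i, (k ! : ℝ)⁻¹ * (A ^ k) i j) = Pi.single 0 1 := by
    ext (_ | k)
    · simp [one_apply]
    · simp [← Finset.mul_sum, hpow]
  have := hasSum_sum (s := Finset.univ) fun i _ => hasSum_exp_apply A i j
  rw [hser] at this
  exact this.unique (hasSum_pi_single 0 1)

end Matrix

section Lattice

variable {d n : ℕ}

theorem sum_discLap [NeZero n] (f : Grid d n → ℝ) : ∑ x, discLap d n f x = 0 := by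
  have hshift : ∀ e : Grid d n,
      ∑ x, f (x + e) = ∑ x, f x ∧ ∑ x, f (x - e) = ∑ x, f x := fun e =>
    ⟨Equiv.sum_comp (Equiv.addRight e) f, Equiv.sum_comp (Equiv.subRight e) f⟩
  simp only [discLap, ← Finset.mul_sum, Function.update_add_eq_add_single,
    Function.update_sub_eq_sub_single]
  rw [Finset.sum_comm]
  simp only [Finset.sum_add_distrib, Finset.sum_sub_distrib, ← Finset.mul_sum, hshift]
  ring

theorem discLap_le (f : Grid d n → ℝ) {M : ℝ} (hf : ∀ y, f y ≤ M) (x : Grid d n) :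
    discLap d n f x ≤ 2 * d * n ^ 2 * (M - f x) := by
  have hterm : ∀ i : Fin d, f (Function.update x i (x i + 1)) - 2 * f x
      + f (Function.update x i (x i - 1)) ≤ 2 * (M - f x) := fun i => by
    linarith [hf (Function.update x i (x i + 1)), hf (Function.update x i (x i - 1))]
  calc discLap d n f x ≤ (n : ℝ) ^ 2 * ∑ _i : Fin d, 2 * (M - f x) :=
        mul_le_mul_of_nonneg_left (Finset.sum_le_sum fun i _ => hterm i) (by positivity)
    _ = 2 * d * n ^ 2 * (M - f x) := by
        rw [Finset.sum_const, Finset.card_univ, Fintype.card_fin, nsmul_eq_mul]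
        ring

theorem lapMat_apply_nonneg [NeZero n] {x y : Grid d n} (hxy : x ≠ y) : 0 ≤ lapMat d n x y := by
  simp only [lapMat, discLap, Matrix.of_apply, if_neg hxy, mul_zero, sub_zero]
  positivity

theorem sum_lapMat_left [NeZero n] (y : Grid d n) : ∑ x, lapMat d n x y = 0 := by
  simp only [lapMat, Matrix.of_apply]
  exact sum_discLap _

theorem heatKer_nonneg [NeZero n] {ν s t : ℝ} (hν : 0 ≤ ν) (hst : s ≤ t) (y x : Grid d n) :
    0 ≤ heatKer d n ν s t y x :=
  Matrix.exp_apply_nonneg (fun _ _ hyx => by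
    simp only [Matrix.smul_apply, smul_eq_mul]
    have := lapMat_apply_nonneg hyx
    have : 0 ≤ t - s := sub_nonneg.2 hst
    positivity) y x

theorem sum_heatKer_left [NeZero n] (ν s t : ℝ) (x : Grid d n) :
    ∑ y, heatKer d n ν s t y x = 1 :=
  Matrix.sum_exp_apply_left (fun x => by
    simp [Matrix.smul_apply, ← Finset.mul_sum, sum_lapMat_left]) x

theorem continuous_heatKer [NeZero n] (ν t : ℝ) (y x : Grid d n) :
    Continuous fun s => heatKer d n ν s t y x := by
  unfold heatKer
  exact ((Matrix.continuous_exp.comp (by fun_prop)).matrix_elem y x)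

theorem continuousOn_discLap {u : ℝ → Grid d n → ℝ} {s : Set ℝ}
    (hu : ∀ x, ContinuousOn (fun t => u t x) s) (x : Grid d n) :
    ContinuousOn (fun t => discLap d n (u t) x) s := by
  unfold discLap
  fun_prop

theorem le_add_mul_of_eq_integral_discLap [NeZero n] {ν T A G : ℝ} (hν : 0 ≤ ν)
    {u g : ℝ → Grid d n → ℝ} (hu : ∀ x, ContinuousOn (fun t => u t x) (Icc 0 T))
    (hg : ∀ x, IntervalIntegrable (fun s => g s x) volume 0 T)
    (heq : ∀ t ∈ Icc 0 T, ∀ x,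
      u t x = u 0 x + (∫ s in 0..t, g s x) + ν * ∫ s in 0..t, discLap d n (u s) x)
    (hgG : ∀ s ∈ Icc 0 T, ∀ x, g s x ≤ G) (hu0 : ∀ x, u 0 x ≤ A) :
    ∀ t ∈ Icc 0 T, ∀ x, u t x ≤ A + G * t :=
  le_add_mul_of_eq_integral (L := fun f x => ν * discLap d n f x) (K := ν * (2 * d * n ^ 2))
    (by positivity)
    (fun f M x hf => by
      have := mul_le_mul_of_nonneg_left (discLap_le f hf x) hν
      linarith)
    hu (fun x => (continuousOn_discLap hu x).const_mul ν) hg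
    (fun t ht x => by rw [heq t ht x, intervalIntegral.integral_const_mul]) hgG hu0

theorem cellAvg_le [NeZero n] {f : (Fin d → ℝ) → ℝ} (hf : Continuous f) {M : ℝ}
    (hM : ∀ y, f y ≤ M) (x : Grid d n) : cellAvg d n f x ≤ M := by
  have hn : (0 : ℝ) < n := Nat.cast_pos.2 (Nat.pos_of_ne_zero (NeZero.ne n))
  have hvol : volume.real (cell d n x) = ((n : ℝ) ^ d)⁻¹ := by
    rw [measureReal_def, cell, Real.volume_pi_Ico, ENNReal.toReal_prod]
    simp_rw [← sub_div, add_sub_cancel_left]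
    simp [hn.le]
  have hbox : cell d n x ⊆ univ.pi fun i => Icc (((x i).val : ℝ) / n) ((((x i).val : ℝ) + 1) / n) :=
    Set.pi_mono fun _ _ => Ico_subset_Icc_self
  have hcpt := isCompact_univ_pi fun i => isCompact_Icc (a := ((x i).val : ℝ) / n)
    (b := (((x i).val : ℝ) + 1) / n)
  calc cellAvg d n f x ≤ (n : ℝ) ^ d * ∫ _ in cell d n x, M := by
        refine mul_le_mul_of_nonneg_left ?_ (by positivity)
        exact setIntegral_mono_on ((hf.continuousOn.integrableOn_compact hcpt).mono_set hbox)
          (integrableOn_const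
            (measure_mono hbox |>.trans_lt (hcpt.measure_lt_top (μ := volume))).ne)
          (MeasurableSet.univ_pi fun _ => measurableSet_Ico) fun y _ => hM y
    _ = M := by rw [setIntegral_const, hvol, smul_eq_mul]; field_simp

end Lattice

section System

variable {d n : ℕ} [NeZero n] {νS νI γ T : ℝ} {lam lam0 : ℝ → ℝ}
  {βe : ℝ → Grid d n → Grid d n → ℝ} {S F I : ℝ → Grid d n → ℝ}

theorem mul_gam_nonneg {t : ℝ} {x : Grid d n} (hβ : ∀ y, 0 ≤ βe t x y) (hS : 0 ≤ S t x)
    (hI : 0 ≤ I t x) (hF : ∀ y, 0 ≤ F t y) : 0 ≤ S t x * gam d n γ βe S I F t x :=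
  mul_nonneg hS (mul_nonneg (Real.rpow_nonneg (add_nonneg hS hI) _)
    (Finset.sum_nonneg fun y _ => mul_nonneg (hβ y) (hF y)))

theorem mul_gam_le {t β C M : ℝ} {x : Grid d n} (hγ : γ ∈ Icc (0 : ℝ) 1)
    (hβ : ∀ y, 0 ≤ βe t x y) (hβsum : ∑ y, βe t x y ≤ β) (hS : 0 ≤ S t x) (hSC : S t x ≤ C)
    (hI : 0 ≤ I t x) (hF : ∀ y, 0 ≤ F t y) (hFM : ∀ y, F t y ≤ M) :
    S t x * gam d n γ βe S I F t x ≤ β * max 1 C * M := by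
  have hsum : ∑ y, βe t x y * F t y ≤ β * M :=
    calc ∑ y, βe t x y * F t y ≤ ∑ y, βe t x y * M :=
          Finset.sum_le_sum fun y _ => mul_le_mul_of_nonneg_left (hFM y) (hβ y)
      _ ≤ β * M := by
          rw [← Finset.sum_mul]
          exact mul_le_mul_of_nonneg_right hβsum ((hF x).trans (hFM x))
  calc S t x * gam d n γ βe S I F t x
      = S t x * (S t x + I t x) ^ (-γ) * ∑ y, βe t x y * F t y := by rw [gam, mul_assoc]
    _ ≤ max 1 C * (β * M) :=
        mul_le_mul ((mul_rpow_neg_le_max_one hS (le_add_of_nonneg_right hI) hγ).trans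
          (max_le_max le_rfl hSC)) hsum (Finset.sum_nonneg fun y _ => mul_nonneg (hβ y) (hF y))
          (by positivity)
    _ = β * max 1 C * M := by ring

theorem intervalIntegrable_mul_gam {β : ℝ} (hT : 0 ≤ T) (hγ : γ ∈ Icc (0 : ℝ) 1)
    (hβm : ∀ x y, Measurable fun t => βe t x y) (hβ : ∀ t x y, 0 ≤ βe t x y)
    (hβsum : ∀ t x, ∑ y, βe t x y ≤ β) (hS : ∀ x, ContinuousOn (fun t => S t x) (Icc 0 T))
    (hI : ∀ x, ContinuousOn (fun t => I t x) (Icc 0 T))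
    (hF : ∀ x, ContinuousOn (fun t => F t x) (Icc 0 T))
    (hpos : ∀ t ∈ Icc 0 T, ∀ x, 0 ≤ S t x ∧ 0 ≤ I t x ∧ 0 ≤ F t x) (x : Grid d n) :
    IntervalIntegrable (fun t => S t x * gam d n γ βe S I F t x) volume 0 T := by
  obtain ⟨MS, hMS⟩ := exists_forall_le_of_continuousOn isCompact_Icc hS
  obtain ⟨MF, hMF⟩ := exists_forall_le_of_continuousOn isCompact_Icc hF
  have hmeas : ∀ u : ℝ → Grid d n → ℝ, (∀ x, ContinuousOn (fun t => u t x) (Icc 0 T)) →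
      ∀ x, AEMeasurable (fun t => u t x) (volume.restrict (Icc 0 T)) := fun u hu x =>
    ((hu x).aestronglyMeasurable measurableSet_Icc).aemeasurable
  rw [intervalIntegrable_iff_integrableOn_Icc_of_le hT]
  refine ⟨?_, .restrict_of_bounded (C := β * max 1 MS * MF) measure_Icc_lt_top ?_⟩
  · have := hmeas S hS x
    have := hmeas I hI x
    have := hmeas F hF
    have := fun y => (hβm x y).aemeasurable (μ := volume.restrict (Icc 0 T))
    unfold gam
    fun_prop
  · refine ae_restrict_of_forall_mem measurableSet_Icc fun t ht => ?_
    obtain ⟨hSt, hIt, -⟩ := hpos t ht x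
    have hFt : ∀ y, 0 ≤ F t y := fun y => (hpos t ht y).2.2
    rw [Real.norm_of_nonneg (mul_gam_nonneg (hβ t x) hSt hIt hFt)]
    exact mul_gam_le hγ (hβ t x) (hβsum t x) hSt (hMS t ht x) hIt hFt (hMF t ht)

theorem IsSolution.S_le (hsol : IsSolution d n νS νI γ lam lam0 βe T S F I) (hνS : 0 ≤ νS)
    (hint : ∀ x, IntervalIntegrable (fun t => S t x * gam d n γ βe S I F t x) volume 0 T)
    (hnn : ∀ t ∈ Icc 0 T, ∀ x, 0 ≤ S t x * gam d n γ βe S I F t x) {A : ℝ}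
    (hA : ∀ x, S 0 x ≤ A) : ∀ t ∈ Icc 0 T, ∀ x, S t x ≤ A := by
  simpa using le_add_mul_of_eq_integral_discLap (g := fun t x => -(S t x * gam d n γ βe S I F t x))
    hνS hsol.1 (fun x => (hint x).neg)
    (fun t ht x => by rw [hsol.2.2.2.1 t ht x, intervalIntegral.integral_neg]; ring)
    (fun s hs x => neg_nonpos.2 (hnn s hs x)) hA

theorem IsSolution.I_le (hsol : IsSolution d n νS νI γ lam lam0 βe T S F I) (hνI : 0 ≤ νI)
    (hint : ∀ x, IntervalIntegrable (fun t => S t x * gam d n γ βe S I F t x) volume 0 T)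
    {A G : ℝ} (hG : ∀ t ∈ Icc 0 T, ∀ x, S t x * gam d n γ βe S I F t x ≤ G)
    (hA : ∀ x, I 0 x ≤ A) : ∀ t ∈ Icc 0 T, ∀ x, I t x ≤ A + G * t :=
  le_add_mul_of_eq_integral_discLap hνI hsol.2.2.1 hint hsol.2.2.2.2.2 hG hA

theorem IsSolution.F_le {lamStar A : ℝ} {ψ : ℝ → ℝ}
    (hsol : IsSolution d n νS νI γ lam lam0 βe T S F I) (hνI : 0 ≤ νI)
    (hlam : ∀ t, lam t ∈ Icc 0 lamStar) (hlam0 : ∀ t, lam0 t ∈ Icc 0 lamStar)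
    (hI0 : ∀ x, I 0 x ∈ Icc 0 A) (hψ : ContinuousOn ψ (Icc 0 T))
    (hSG : ∀ t ∈ Icc 0 T, ∀ x,
      0 ≤ S t x * gam d n γ βe S I F t x ∧ S t x * gam d n γ βe S I F t x ≤ ψ t) :
    ∀ t ∈ Icc 0 T, ∀ x, F t x ≤ lamStar * A + lamStar * ∫ s in 0..t, ψ s := by
  intro t ht x
  have hls : 0 ≤ lamStar := (hlam0 t).1.trans (hlam0 t).2
  have hq : ∀ s ≤ t, ∀ y, 0 ≤ heatKer d n νI s t y x := fun s hs y => heatKer_nonneg hνI hs y x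
  have hinit : lam0 t * ∑ y, I 0 y * heatKer d n νI 0 t y x ≤ lamStar * A := by
    refine mul_le_mul (hlam0 t).2 ?_
      (Finset.sum_nonneg fun y _ => mul_nonneg (hI0 y).1 (hq 0 ht.1 y)) hls
    calc ∑ y, I 0 y * heatKer d n νI 0 t y x ≤ ∑ y, A * heatKer d n νI 0 t y x :=
          Finset.sum_le_sum fun y _ => mul_le_mul_of_nonneg_right (hI0 y).2 (hq 0 ht.1 y)
      _ = A := by rw [← Finset.mul_sum, sum_heatKer_left, mul_one]
  have hint : ∀ y, IntervalIntegrable (fun s => lamStar * ψ s * heatKer d n νI s t y x)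
      volume 0 t := fun y =>
    (((hψ.mono (Icc_subset_Icc_right ht.2)).const_mul lamStar).mul
      (continuous_heatKer νI t y x).continuousOn).intervalIntegrable_of_Icc ht.1
  have hsource : ∑ y, ∫ s in 0..t,
      lam (t - s) * (S s y * gam d n γ βe S I F s y) * heatKer d n νI s t y x
        ≤ lamStar * ∫ s in 0..t, ψ s :=
    calc _ ≤ ∑ y, ∫ s in 0..t, lamStar * ψ s * heatKer d n νI s t y x := by
          refine Finset.sum_le_sum fun y _ =>
            intervalIntegral.integral_mono_on_of_nonneg ht.1 (fun s hs => ?_) (fun s hs => ?_)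
              (hint y)
          all_goals obtain ⟨hSG0, hSGψ⟩ := hSG s ⟨hs.1, hs.2.trans ht.2⟩ y
          · exact mul_nonneg (mul_nonneg (hlam _).1 hSG0) (hq s hs.2 y)
          · exact mul_le_mul_of_nonneg_right (mul_le_mul (hlam _).2 hSGψ hSG0 hls) (hq s hs.2 y)
      _ = ∫ s in 0..t, ∑ y, lamStar * ψ s * heatKer d n νI s t y x :=
          (intervalIntegral.integral_finsetSum fun y _ => hint y).symm
      _ = lamStar * ∫ s in 0..t, ψ s := by
          simp_rw [← Finset.mul_sum, sum_heatKer_left, mul_one]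
          exact intervalIntegral.integral_const_mul _ _
  rw [hsol.2.2.2.2.1 t ht x]
  exact add_le_add hinit hsource

theorem IsSolution.F_le_exp {lamStar A K : ℝ}
    (hsol : IsSolution d n νS νI γ lam lam0 βe T S F I) (hνI : 0 ≤ νI)
    (hlam : ∀ t, lam t ∈ Icc 0 lamStar) (hlam0 : ∀ t, lam0 t ∈ Icc 0 lamStar)
    (hI0 : ∀ x, I 0 x ∈ Icc 0 A) (hK : 0 ≤ K)
    (hSG0 : ∀ t ∈ Icc 0 T, ∀ x, 0 ≤ S t x * gam d n γ βe S I F t x)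
    (hSG : ∀ t ∈ Icc 0 T, ∀ x M, (∀ y, F t y ≤ M) → S t x * gam d n γ βe S I F t x ≤ K * M) :
    ∀ t ∈ Icc 0 T, ∀ x, F t x ≤ lamStar * A * Real.exp (lamStar * K * t) := by
  set Fmax : ℝ → ℝ := fun s => Finset.univ.sup' Finset.univ_nonempty (F s)
  have hle : ∀ s y, F s y ≤ Fmax s := fun s y => Finset.le_sup' (F s) (Finset.mem_univ y)
  have hFmax : ContinuousOn Fmax (Icc 0 T) :=
    ContinuousOn.finset_sup'_apply _ fun y _ => hsol.2.1 y
  have hls : 0 ≤ lamStar := (hlam0 0).1.trans (hlam0 0).2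
  have hgron : ∀ s ∈ Icc 0 T, Fmax s ≤ lamStar * A + lamStar * K * ∫ r in 0..s, Fmax r :=
    fun s hs => Finset.sup'_le _ _ fun y _ =>
      (hsol.F_le hνI hlam hlam0 hI0 (hFmax.const_mul K)
        (fun r hr z => ⟨hSG0 r hr z, hSG r hr z _ (hle r)⟩) s hs y).trans_eq
        (by rw [intervalIntegral.integral_const_mul]; ring)
  exact fun t ht x =>
    (hle t x).trans (le_mul_exp_of_le_add_mul_integral hFmax (by positivity) hgron t ht)

end System

theorem sup_bounds_deterministic_system_general
    (d : ℕ) (νS νI γ lamStar βStar c₀ C₀ T : ℝ)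
    (hνS : 0 < νS) (hνI : 0 < νI) (hγ : γ ∈ Icc (0:ℝ) 1)
    (hls : 0 < lamStar) (hbs : 0 < βStar)
    (hc₀ : 0 < c₀) (hcC : c₀ ≤ C₀) (hT : 0 < T) :
    ∃ C : ℝ, 0 < C ∧
      ∀ (n : ℕ) [NeZero n],
      ∀ lam lam0 : ℝ → ℝ, Measurable lam → Measurable lam0 →
        (∀ t, lam t ∈ Icc 0 lamStar) → (∀ t, lam0 t ∈ Icc 0 lamStar) →
      ∀ βe : ℝ → Grid d n → Grid d n → ℝ,
        (∀ x y, Measurable fun t => βe t x y) →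
        (∀ t x y, 0 ≤ βe t x y) →
        (∀ t x, ∑ y, βe t x y ≤ βStar) →
      ∀ S₀ I₀ : (Fin d → ℝ) → ℝ, Continuous S₀ → Continuous I₀ →
        (∀ y i, S₀ (Function.update y i (y i + 1)) = S₀ y) →
        (∀ y i, I₀ (Function.update y i (y i + 1)) = I₀ y) →
        (∀ y, S₀ y ∈ Icc c₀ C₀) → (∀ y, I₀ y ∈ Icc 0 C₀) →
      ∀ S F I : ℝ → Grid d n → ℝ,
        (∀ x, S 0 x = cellAvg d n S₀ x) → (∀ x, I 0 x = cellAvg d n I₀ x) →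
        IsSolution d n νS νI γ lam lam0 βe T S F I →
        (∀ t ∈ Icc (0:ℝ) T, ∀ x, 0 ≤ S t x ∧ 0 ≤ I t x ∧ 0 ≤ F t x ∧ 0 < S t x + I t x) →
      ∀ t ∈ Icc (0:ℝ) T, ∀ x, S t x ≤ C ∧ I t x ≤ C := by
  have hC₀ : 0 < C₀ := hc₀.trans_le hcC
  set K := βStar * max 1 C₀
  set Cf := lamStar * C₀ * Real.exp (lamStar * K * T)
  have hKCf : 0 ≤ K * Cf := by positivity
  refine ⟨C₀ + K * Cf * T + 1, by positivity, ?_⟩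
  intro n _ lam lam0 _ _ hlam hlam0 βe hβm hβ hβsum S₀ I₀ hS₀ hI₀ _ _ hS₀C hI₀C S F I hS0 hI0
    hsol hpos t ht x
  have hnn : ∀ s ∈ Icc 0 T, ∀ y, 0 ≤ S s y ∧ 0 ≤ I s y ∧ 0 ≤ F s y :=
    fun s hs y => ⟨(hpos s hs y).1, (hpos s hs y).2.1, (hpos s hs y).2.2.1⟩
  have hSG0 : ∀ s ∈ Icc 0 T, ∀ y, 0 ≤ S s y * gam d n γ βe S I F s y := fun s hs y =>
    mul_gam_nonneg (hβ s y) (hnn s hs y).1 (hnn s hs y).2.1 fun z => (hnn s hs z).2.2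
  have hint := intervalIntegrable_mul_gam hT.le hγ hβm hβ hβsum hsol.1 hsol.2.2.1 hsol.2.1 hnn
  have hS := hsol.S_le hνS.le hint hSG0 fun y => hS0 y ▸ cellAvg_le hS₀ (fun z => (hS₀C z).2) y
  have hI0 : ∀ y, I 0 y ∈ Icc 0 C₀ := fun y =>
    ⟨(hnn 0 (left_mem_Icc.2 hT.le) y).2.1, hI0 y ▸ cellAvg_le hI₀ (fun z => (hI₀C z).2) y⟩
  have hSG : ∀ s ∈ Icc 0 T, ∀ y M, (∀ z, F s z ≤ M) → S s y * gam d n γ βe S I F s y ≤ K * M :=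
    fun s hs y _ hM => mul_gam_le hγ (hβ s y) (hβsum s y) (hnn s hs y).1 (hS s hs y)
      (hnn s hs y).2.1 (fun z => (hnn s hs z).2.2) hM
  have hF := hsol.F_le_exp hνI.le hlam hlam0 hI0 (by positivity) hSG0 hSG
  have hI := hsol.I_le hνI.le hint (G := K * Cf) (fun s hs y => hSG s hs y _ fun z =>
    (hF s hs z).trans (mul_le_mul_of_nonneg_left (Real.exp_le_exp.2 (by gcongr; exact hs.2))
      (by positivity))) fun y => (hI0 y).2
  have hslack : K * Cf * t ≤ K * Cf * T := mul_le_mul_of_nonneg_left ht.2 hKCf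
  exact ⟨by linarith [hS t ht x, mul_nonneg hKCf ht.1], by linarith [hI t ht x]⟩

/-- Lemma `bornSI`: uniform `L^∞` bounds for the deterministic
`ε`-system, with a constant depending only on `T, d, ν_S, ν_I, γ, λ*, β*, c₀, C₀`. -/
theorem sup_bounds_deterministic_system
    (d : ℕ) (hd : 1 ≤ d) (νS νI γ lamStar βStar c₀ C₀ T : ℝ)
    (hνS : 0 < νS) (hνI : 0 < νI) (hγ : γ ∈ Icc (0:ℝ) 1)
    (hls : 0 < lamStar) (hbs : 0 < βStar)
    (hc₀ : 0 < c₀) (hcC : c₀ ≤ C₀) (hT : 0 < T) :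
    ∃ C : ℝ, 0 < C ∧
      ∀ (n : ℕ) [NeZero n],
      ∀ lam lam0 : ℝ → ℝ, Measurable lam → Measurable lam0 →
        (∀ t, lam t ∈ Icc 0 lamStar) → (∀ t, lam0 t ∈ Icc 0 lamStar) →
      ∀ βe : ℝ → Grid d n → Grid d n → ℝ,
        (∀ x y, Measurable fun t => βe t x y) →
        (∀ t x y, 0 ≤ βe t x y) →
        (∀ t x, ∑ y, βe t x y ≤ βStar) →
      ∀ S₀ I₀ : (Fin d → ℝ) → ℝ, Continuous S₀ → Continuous I₀ →
        (∀ y i, S₀ (Function.update y i (y i + 1)) = S₀ y) →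
        (∀ y i, I₀ (Function.update y i (y i + 1)) = I₀ y) →
        (∀ y, S₀ y ∈ Icc c₀ C₀) → (∀ y, I₀ y ∈ Icc 0 C₀) →
      ∀ S F I : ℝ → Grid d n → ℝ,
        (∀ x, S 0 x = cellAvg d n S₀ x) → (∀ x, I 0 x = cellAvg d n I₀ x) →
        IsSolution d n νS νI γ lam lam0 βe T S F I →
        (∀ t ∈ Icc (0:ℝ) T, ∀ x, 0 ≤ S t x ∧ 0 ≤ I t x ∧ 0 ≤ F t x ∧ 0 < S t x + I t x) →
      ∀ t ∈ Icc (0:ℝ) T, ∀ x, S t x ≤ C ∧ I t x ≤ C :=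
  sup_bounds_deterministic_system_general d νS νI γ lamStar βStar c₀ C₀ T hνS hνI hγ hls hbs hc₀ hcC
    hT
end

section
/- Let Ī₀ : T^d → ℝ be continuous with 0 ≤ Ī₀ ≤ C₀ and ∫_{T^d} Ī₀(x)dx > 0, let λ* > 0 and let λ̄₀ : [0,∞) → [0,λ*] be measurable. For ε = 1/n set Ī^ε(0,x) := ε^{−d} ∫_{V_ε(x)} Ī₀(y)dy and Ī^ε(0) := Σ_{x ∈ D_ε} Ī^ε(0,x). Let (N_k, ε_k = 1/n_k) be a sequence with N_k → ∞, ε_k → 0 and N_k ε_k^d → ∞, and for each k let m_k ∈ ℕ satisfy |m_k − N_k Ī^{ε_k}(0)| ≤ 1. Suppose that on some probability space, for each t ∈ [0,T] there are random variables λ_{-1}(t), …, λ_{-m_k}(t), i.i.d. with values in [0,λ*] and mean E[λ_{-j}(t)] = λ̄₀(t), and D_{ε_k}-valued random variables Y_1(t), …, Y_{m_k}(t), i.i.d. with P(Y_j(t) = x) = Σ_y (Ī^{ε_k}(0,y)/Ī^{ε_k}(0)) q_{ε_k}^{y,x}(0,t), the family of λ's being independent of the family of Y's. Define F₀^{N_k,ε_k}(t,x)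 := N_k^{−1} Σ_{j=1}^{m_k} λ_{-j}(t) 1_{Y_j(t) = x} and F̄₀^{ε_k}(t,x) := λ̄₀(t) Σ_y Ī^{ε_k}(0,y) q_{ε_k}^{y,x}(0,t). Then for every T > 0, sup_{0 ≤ t ≤ T} E[ sup_{x ∈ D_{ε_k}} |F₀^{N_k,ε_k}(t,x) − F̄₀^{ε_k}(t,x)|² ] → 0 as k → ∞. -/
open MeasureTheory ProbabilityTheory Set Filter

/-!
Write `W x = ∑ⱼ λⱼ 1{Yⱼ = x}`. The summands are uncorrelated: the `λ`'s and the `Y`'s are two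
independent families of independent variables, so for `i ≠ j` the mixed moment of
`λᵢ 1{Yᵢ = x}` and `λⱼ 1{Yⱼ = x}` factors into moments of single variables. Hence
`Var (W x) ≤ m λ*² p(x)`, where `p` is the common law of the `Yⱼ`, while the mean `m λ̄₀ p(x)`
is within `λ* p(x)` of the centring `N λ̄₀ Ī^ε(0) p(x)` because `|m - N Ī^ε(0)| ≤ 1`.
Bounding the supremum over sites by the sum and using `∑ₓ p(x) = 1` gives
`E sup_x |F₀ - F̄₀|² ≤ λ*² (m + 1) / N²` uniformly in `t`. As the cells partition the unit
cube, `Ī^ε(0) = ε⁻ᵈ ∫ Ī₀`, so `(m + 1) / N² ≲ ε⁻ᵈ / N + 2 / N² → 0`.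
-/

section Cells

lemma mem_Ico_div_iff_floor_eq {n k : ℕ} (hn : 0 < n) {y : ℝ} :
    y ∈ Ico ((k : ℝ) / n) ((k + 1) / n) ↔ 0 ≤ y ∧ ⌊(n : ℝ) * y⌋₊ = k := by
  have hn' : (0 : ℝ) < n := by exact_mod_cast hn
  constructor
  · rintro ⟨hlo, hhi⟩
    have hy : 0 ≤ y := le_trans (by positivity) hlo
    refine ⟨hy, (Nat.floor_eq_iff (by positivity)).2 ⟨?_, ?_⟩⟩
    · rwa [div_le_iff₀ hn', mul_comm] at hlo
    · rwa [lt_div_iff₀ hn', mul_comm] at hhi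
  · rintro ⟨hy, hfloor⟩
    obtain ⟨hlo, hhi⟩ := (Nat.floor_eq_iff (by positivity)).1 hfloor
    exact ⟨by rwa [div_le_iff₀ hn', mul_comm], by rwa [lt_div_iff₀ hn', mul_comm]⟩

lemma measurableSet_cell (d n : ℕ) (x : Grid d n) : MeasurableSet (cell d n x) :=
  .univ_pi fun _ => measurableSet_Ico

variable {d n : ℕ} [NeZero n]

lemma mem_cell_iff {x : Grid d n} {y : Fin d → ℝ} :
    y ∈ cell d n x ↔ ∀ i, 0 ≤ y i ∧ ⌊(n : ℝ) * y i⌋₊ = (x i).val := by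
  simp only [cell, Set.mem_univ_pi, mem_Ico_div_iff_floor_eq (Nat.pos_of_neZero n)]

open Function in
lemma pairwise_disjoint_cell : Pairwise (Disjoint on cell d n) := by
  intro x x' hne
  refine Set.disjoint_left.2 fun y hy hy' => hne (funext fun i => ZMod.val_injective n ?_)
  rw [← ((mem_cell_iff.1 hy) i).2, ((mem_cell_iff.1 hy') i).2]

lemma iUnion_cell : ⋃ x : Grid d n, cell d n x = univ.pi fun _ => Ico (0 : ℝ) 1 := by
  have hn : (0 : ℝ) < n := by exact_mod_cast Nat.pos_of_neZero n
  ext y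
  simp only [mem_iUnion, mem_cell_iff, Set.mem_univ_pi, mem_Ico]
  constructor
  · rintro ⟨x, hx⟩ i
    obtain ⟨hy, hfloor⟩ := hx i
    refine ⟨hy, ?_⟩
    have := (Nat.floor_lt (by positivity)).1 (hfloor ▸ ZMod.val_lt (x i))
    nlinarith
  · intro hy
    have hlt : ∀ i, ⌊(n : ℝ) * y i⌋₊ < n := fun i =>
      (Nat.floor_lt (by nlinarith [(hy i).1])).2 (by nlinarith [(hy i).2])
    exact ⟨fun i => (⌊(n : ℝ) * y i⌋₊ : ZMod n), fun i =>
      ⟨(hy i).1, (ZMod.val_cast_of_lt (hlt i)).symm⟩⟩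

lemma sum_cellAvg {f : (Fin d → ℝ) → ℝ}
    (hf : IntegrableOn f (univ.pi fun _ => Ico (0 : ℝ) 1)) :
    ∑ x : Grid d n, cellAvg d n f x
      = (n : ℝ) ^ d * ∫ y in univ.pi (fun _ => Ico (0 : ℝ) 1), f y := by
  rw [← iUnion_cell (n := n), integral_iUnion_fintype (measurableSet_cell d n)
    pairwise_disjoint_cell fun x => hf.mono_set ((subset_iUnion _ x).trans iUnion_cell.subset),
    Finset.mul_sum]
  rfl

end Cells

section Moments

variable {Ω : Type*} [MeasurableSpace Ω] {P : Measure Ω} [IsProbabilityMeasure P]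

lemma integral_sub_const_sq {X : Ω → ℝ} (hX : MemLp X 2 P) (c : ℝ) :
    ∫ ω, (X ω - c) ^ 2 ∂P = Var[X; P] + (P[X] - c) ^ 2 := by
  have hXc : MemLp (fun ω => X ω - c) 2 P := hX.sub (memLp_const c)
  rw [← variance_sub_const hX.aestronglyMeasurable c, variance_eq_sub hXc,
    integral_sub (hX.integrable one_le_two) (integrable_const c)]
  simp

variable {ι : Type*} {U V : ι → Ω → ℝ}

lemma covariance_mul_eq_zero_of_iIndepFun (hU : iIndepFun U P) (hV : iIndepFun V P)
    (hUV : IndepFun (fun ω i => U i ω) (fun ω i => V i ω) P)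
    (hUm : ∀ i, AEStronglyMeasurable (U i) P) (hVm : ∀ i, AEStronglyMeasurable (V i) P)
    (hUV2 : ∀ i, MemLp (U i * V i) 2 P) {i j : ι} (hij : i ≠ j) :
    cov[U i * V i, U j * V j; P] = 0 := by
  have hprod : ∀ a b : ι, P[U a * V b] = P[U a] * P[V b] := fun a b =>
    (hUV.comp (measurable_pi_apply a) (measurable_pi_apply b)).integral_mul_eq_mul_integral
      (hUm a) (hVm b)
  have hcross : P[U i * V i * (U j * V j)] = P[U i * U j] * P[V i * V j] := by
    rw [mul_mul_mul_comm]
    exact (hUV.comp ((measurable_pi_apply i).mul (measurable_pi_apply j))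
      ((measurable_pi_apply i).mul (measurable_pi_apply j))).integral_mul_eq_mul_integral
      ((hUm i).mul (hUm j)) ((hVm i).mul (hVm j))
  rw [covariance_eq_sub (hUV2 i) (hUV2 j), hcross,
    (hU.indepFun hij).integral_mul_eq_mul_integral (hUm i) (hUm j),
    (hV.indepFun hij).integral_mul_eq_mul_integral (hVm i) (hVm j), hprod, hprod]
  ring

lemma variance_sum_mul_of_iIndepFun [Fintype ι] (hU : iIndepFun U P) (hV : iIndepFun V P)
    (hUV : IndepFun (fun ω i => U i ω) (fun ω i => V i ω) P)
    (hUm : ∀ i, AEStronglyMeasurable (U i) P) (hVm : ∀ i, AEStronglyMeasurable (V i) P)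
    (hUV2 : ∀ i, MemLp (U i * V i) 2 P) :
    Var[fun ω => ∑ i, U i ω * V i ω; P] = ∑ i, Var[U i * V i; P] := by
  refine (variance_fun_sum hUV2).trans (Finset.sum_congr rfl fun i _ => ?_)
  rw [Finset.sum_eq_single i (fun j _ hji => covariance_mul_eq_zero_of_iIndepFun hU hV hUV hUm hVm
    hUV2 hji.symm) (by simp), covariance_self (hUV2 i).aemeasurable]

end Moments

lemma integral_iSup_sq_abs_le_sum {Ω G : Type*} [MeasurableSpace Ω] {μ : Measure Ω} [Fintype G]
    {F : G → Ω → ℝ} (hF : ∀ x, Integrable (fun ω => F x ω ^ 2) μ) :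
    ∫ ω, ⨆ x, |F x ω| ^ 2 ∂μ ≤ ∑ x, ∫ ω, F x ω ^ 2 ∂μ := by
  rw [← integral_finsetSum _ fun x _ => hF x]
  refine integral_mono_of_nonneg (ae_of_all _ fun ω => Real.iSup_nonneg fun x => by positivity)
    (integrable_finsetSum _ fun x _ => hF x) (ae_of_all _ fun ω => ?_)
  refine Real.iSup_le (fun x => ?_) (by positivity)
  rw [sq_abs]
  exact Finset.single_le_sum (f := fun y => F y ω ^ 2) (fun y _ => sq_nonneg _) (Finset.mem_univ x)

section WeightedCount

variable {Ω ι G : Type*} [Fintype ι] [DecidableEq G]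

def weightedCount (lam : ι → Ω → ℝ) (Y : ι → Ω → G) (x : G) (ω : Ω) : ℝ :=
  ∑ j, lam j ω * if Y j ω = x then 1 else 0

variable [MeasurableSpace Ω] {P : Measure Ω} [IsProbabilityMeasure P]
  [MeasurableSpace G] [MeasurableSingletonClass G] {lam : ι → Ω → ℝ} {Y : ι → Ω → G}

omit [IsProbabilityMeasure P] in
lemma memLp_mul_ite [IsFiniteMeasure P] {f : Ω → ℝ} {Z : Ω → G} (hf : Measurable f)
    (hZ : Measurable Z) {L : ℝ} (hfL : ∀ ω, |f ω| ≤ L) (x : G) :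
    MemLp (fun ω => f ω * if Z ω = x then 1 else 0) 2 P :=
  MemLp.of_bound (hf.mul (Measurable.ite (hZ (measurableSet_singleton x)) measurable_const
    measurable_const)).aestronglyMeasurable L <| ae_of_all _ fun ω => by
      by_cases hx : Z ω = x <;> simp [hx, hfL ω, (abs_nonneg _).trans (hfL ω)]

lemma memLp_weightedCount (hlamm : ∀ j, Measurable (lam j)) (hYm : ∀ j, Measurable (Y j))
    {L : ℝ} (hlamL : ∀ j ω, |lam j ω| ≤ L) (x : G) : MemLp (weightedCount lam Y x) 2 P :=
  memLp_finsetSum _ fun j _ => memLp_mul_ite (hlamm j) (hYm j) (hlamL j) x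

lemma integral_weightedCount_sub_sq_le (hlam : iIndepFun lam P) (hY : iIndepFun Y P)
    (hlamY : IndepFun (fun ω j => lam j ω) (fun ω j => Y j ω) P)
    (hlamm : ∀ j, Measurable (lam j)) (hYm : ∀ j, Measurable (Y j))
    {L b : ℝ} (hlamL : ∀ j ω, |lam j ω| ≤ L) (hmean : ∀ j, P[lam j] = b)
    {x : G} {p : ℝ} (hp : ∀ j, P.real {ω | Y j ω = x} = p) (c : ℝ) :
    ∫ ω, (weightedCount lam Y x ω - c) ^ 2 ∂P
      ≤ Fintype.card ι * L ^ 2 * p + (Fintype.card ι * b * p - c) ^ 2 := by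
  set ind : ι → Ω → ℝ := fun j ω => if Y j ω = x then 1 else 0
  have hindicator : Measurable fun g : G => if g = x then (1 : ℝ) else 0 :=
    Measurable.ite (measurableSet_singleton x) measurable_const measurable_const
  have hfiber : ∀ j, MeasurableSet {ω | Y j ω = x} := fun j => hYm j (measurableSet_singleton x)
  have hind_eq : ∀ j, ind j = {ω | Y j ω = x}.indicator 1 := fun j => by
    ext ω
    by_cases h : Y j ω = x <;> simp [ind, h]
  have hindm : ∀ j, Measurable (ind j) := fun j => hindicator.comp (hYm j)
  have hind_int : ∀ j, Integrable (ind j) P := fun j => by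
    rw [hind_eq]
    exact (integrable_const 1).indicator (hfiber j)
  have hind_mean : ∀ j, P[ind j] = p := fun j => by
    rw [hind_eq, integral_indicator_one (hfiber j), hp]
  have hZ_memLp : ∀ j, MemLp (lam j * ind j) 2 P := fun j =>
    memLp_mul_ite (hlamm j) (hYm j) (hlamL j) x
  have hZ_sq : ∀ j ω, (lam j * ind j) ω ^ 2 ≤ L ^ 2 * ind j ω := fun j ω => by
    have h := sq_le_sq.2 ((hlamL j ω).trans (le_abs_self L))
    by_cases hx : Y j ω = x <;> simp [ind, hx, h]
  have hind_indep : iIndepFun ind P := hY.comp _ fun _ => hindicator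
  have hlam_ind : IndepFun (fun ω j => lam j ω) (fun ω j => ind j ω) P :=
    hlamY.comp measurable_id
      (measurable_pi_lambda _ fun j => hindicator.comp (measurable_pi_apply j))
  have hZ_mean : ∀ j, P[lam j * ind j] = b * p := fun j => by
    have h : P[lam j * ind j] = P[lam j] * P[ind j] :=
      (hlam_ind.comp (measurable_pi_apply j) (measurable_pi_apply j)).integral_mul_eq_mul_integral
        (hlamm j).aestronglyMeasurable (hindm j).aestronglyMeasurable
    rw [h, hmean, hind_mean]
  have hvar : Var[weightedCount lam Y x; P] ≤ Fintype.card ι * L ^ 2 * p :=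
    calc Var[weightedCount lam Y x; P] = ∑ j, Var[lam j * ind j; P] :=
          variance_sum_mul_of_iIndepFun hlam hind_indep hlam_ind
            (fun j => (hlamm j).aestronglyMeasurable) (fun j => (hindm j).aestronglyMeasurable)
            hZ_memLp
      _ ≤ ∑ j, P[(lam j * ind j) ^ 2] := Finset.sum_le_sum fun j _ =>
          variance_le_expectation_sq (hZ_memLp j).aestronglyMeasurable
      _ ≤ ∑ _j : ι, L ^ 2 * p := Finset.sum_le_sum fun j _ => by
          rw [← hind_mean j, ← integral_const_mul]
          exact integral_mono (hZ_memLp j).integrable_sq ((hind_int j).const_mul _) (hZ_sq j)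
      _ = Fintype.card ι * L ^ 2 * p := by simp [mul_assoc]
  have hW_mean : P[weightedCount lam Y x] = Fintype.card ι * b * p :=
    calc P[weightedCount lam Y x] = ∑ j, P[lam j * ind j] :=
          integral_finsetSum _ fun j _ => (hZ_memLp j).integrable one_le_two
      _ = Fintype.card ι * b * p := by
          rw [Finset.sum_congr rfl fun j _ => hZ_mean j, Finset.sum_const, Finset.card_univ,
            nsmul_eq_mul, mul_assoc]
  rw [integral_sub_const_sq (memLp_weightedCount hlamm hYm hlamL x) c, hW_mean]
  linarith

lemma integral_iSup_sq_weightedCount_sub_le [Fintype G] [Nonempty ι] (hlam : iIndepFun lam P)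
    (hY : iIndepFun Y P) (hlamY : IndepFun (fun ω j => lam j ω) (fun ω j => Y j ω) P)
    (hlamm : ∀ j, Measurable (lam j)) (hYm : ∀ j, Measurable (Y j))
    {L b : ℝ} (hlamL : ∀ j ω, |lam j ω| ≤ L) (hmean : ∀ j, P[lam j] = b) (hb : |b| ≤ L)
    {p : G → ℝ} (hp : ∀ j x, P.real {ω | Y j ω = x} = p x)
    {N I : ℝ} (hN : N ≠ 0) (hcount : |(Fintype.card ι : ℝ) - N * I| ≤ 1)
    {c : G → ℝ} (hc : ∀ x, c x = I * p x) :
    ∫ ω, ⨆ x, |N⁻¹ * weightedCount lam Y x ω - b * c x| ^ 2 ∂P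
      ≤ L ^ 2 * (Fintype.card ι + 1) / N ^ 2 := by
  simp only [hc, ← mul_assoc]
  obtain ⟨j₀⟩ := ‹Nonempty ι›
  have hp_nonneg : ∀ x, 0 ≤ p x := fun x => hp j₀ x ▸ measureReal_nonneg
  have hp_le_one : ∀ x, p x ≤ 1 := fun x => hp j₀ x ▸ measureReal_le_one
  have hp_sum : ∑ x, p x = 1 :=
    calc ∑ x, p x = ∑ x, P.real (Y j₀ ⁻¹' {x}) := Finset.sum_congr rfl fun x _ => (hp j₀ x).symm
      _ = 1 := by
        rw [sum_measureReal_preimage_singleton (μ := P) _ fun x _ =>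
          hYm j₀ (measurableSet_singleton x)]
        simp
  have hsite : ∀ x, ∫ ω, (N⁻¹ * weightedCount lam Y x ω - b * I * p x) ^ 2 ∂P
      ≤ L ^ 2 * (Fintype.card ι + 1) * p x / N ^ 2 := by
    intro x
    have hrescale : ∀ ω, (N⁻¹ * weightedCount lam Y x ω - b * I * p x) ^ 2
        = (weightedCount lam Y x ω - N * (b * I * p x)) ^ 2 / N ^ 2 := fun ω => by
      field_simp
    have hbias : (Fintype.card ι * b * p x - N * (b * I * p x)) ^ 2 ≤ L ^ 2 * p x :=
      calc _ = b ^ 2 * p x ^ 2 * (Fintype.card ι - N * I) ^ 2 := by ring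
        _ ≤ L ^ 2 * p x * 1 := by
          have := hp_nonneg x
          refine mul_le_mul (mul_le_mul (sq_le_sq.2 (hb.trans (le_abs_self L)))
            (pow_le_of_le_one this (hp_le_one x) two_ne_zero) (by positivity) (by positivity))
            ((sq_le_one_iff_abs_le_one _).2 hcount) (by positivity) (by positivity)
        _ = L ^ 2 * p x := mul_one _
    simp_rw [hrescale]
    rw [integral_div]
    gcongr
    calc _ ≤ _ := integral_weightedCount_sub_sq_le hlam hY hlamY hlamm hYm hlamL hmean (hp · x) _
      _ ≤ L ^ 2 * (Fintype.card ι + 1) * p x := by linarith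
  have hint : ∀ x, Integrable (fun ω => (N⁻¹ * weightedCount lam Y x ω - b * I * p x) ^ 2) P :=
    fun x => (((memLp_weightedCount hlamm hYm hlamL x).const_mul N⁻¹).sub
      (memLp_const _)).integrable_sq
  calc _ ≤ ∑ x, ∫ ω, (N⁻¹ * weightedCount lam Y x ω - b * I * p x) ^ 2 ∂P :=
        integral_iSup_sq_abs_le_sum hint
    _ ≤ ∑ x, L ^ 2 * (Fintype.card ι + 1) * p x / N ^ 2 := Finset.sum_le_sum fun x _ => hsite x
    _ = L ^ 2 * (Fintype.card ι + 1) / N ^ 2 := by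
      rw [← Finset.sum_div, ← Finset.mul_sum, hp_sum, mul_one]

end WeightedCount

lemma tendsto_add_one_div_sq_of_abs_sub_mul_le {m N a : ℕ → ℝ} (hN : Tendsto N atTop atTop)
    (hNa : Tendsto (fun k => N k / a k) atTop atTop) (hm : ∀ k, |m k - N k * a k| ≤ 1) :
    Tendsto (fun k => (m k + 1) / N k ^ 2) atTop (nhds 0) := by
  have ha : Tendsto (fun k => a k / N k) atTop (nhds 0) := by
    exact hNa.inv_tendsto_atTop.congr fun k => inv_div _ _
  have hinv : Tendsto (fun k => 2 / N k ^ 2) atTop (nhds 0) :=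
    ((tendsto_pow_atTop two_ne_zero).comp hN).const_div_atTop 2
  refine tendsto_of_tendsto_of_tendsto_of_le_of_le' ha (by simpa using ha.add hinv) ?_ ?_
  all_goals filter_upwards [hN.eventually_gt_atTop 0] with k hk
  all_goals obtain ⟨hlo, hhi⟩ := abs_le.1 (hm k)
  · calc a k / N k = N k * a k / N k ^ 2 := by field_simp
      _ ≤ (m k + 1) / N k ^ 2 := by gcongr; linarith
  · calc (m k + 1) / N k ^ 2 ≤ (N k * a k + 2) / N k ^ 2 :=
        div_le_div_of_nonneg_right (by linarith) (by positivity)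
      _ = a k / N k + 2 / N k ^ 2 := by field_simp

lemma sum_mul_eq_mul_sum_div_mul {α : Type*} [Fintype α] {a : α → ℝ} (ha : ∑ y, a y ≠ 0)
    (q : α → ℝ) : ∑ y, a y * q y = (∑ y, a y) * ∑ y, a y / (∑ z, a z) * q y := by
  rw [Finset.mul_sum]
  exact Finset.sum_congr rfl fun y _ => by field_simp

theorem initial_infectivity_LLN_general
    (d : ℕ) (νI lamStar T : ℝ)
    (I₀ : (Fin d → ℝ) → ℝ) (hI₀c : Continuous I₀)
    (hI₀pos : 0 < ∫ y in Set.univ.pi (fun _ : Fin d => Ico (0:ℝ) 1), I₀ y)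
    (lam0 : ℝ → ℝ) (hlam0b : ∀ t, lam0 t ∈ Icc 0 lamStar)
    (ns N m : ℕ → ℕ)
    (hN : Tendsto (fun k => (N k : ℝ)) atTop atTop)
    (hNeps : Tendsto (fun k => (N k : ℝ) / ((ns k : ℝ) + 1) ^ d) atTop atTop)
    (hm : ∀ k, |(m k : ℝ) -
      (N k : ℝ) * ∑ x : Grid d (ns k + 1), cellAvg d (ns k + 1) I₀ x| ≤ 1)
    (Ω : ℕ → Type) (mΩ : ∀ k, MeasurableSpace (Ω k)) (P : ∀ k, Measure (Ω k))
    (hP : ∀ k, IsProbabilityMeasure (P k))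
    (lam : ∀ k, ℝ → Fin (m k) → Ω k → ℝ)
    (Y : ∀ k, ℝ → Fin (m k) → Ω k → Grid d (ns k + 1))
    (hlamMeas : ∀ k, ∀ t ∈ Icc (0:ℝ) T, ∀ j, Measurable (lam k t j))
    (hYMeas : ∀ k, ∀ t ∈ Icc (0:ℝ) T, ∀ j, Measurable (Y k t j))
    (hlamIndep : ∀ k, ∀ t ∈ Icc (0:ℝ) T,
      iIndepFun (lam k t) (P k))
    (hlamBound : ∀ k, ∀ t ∈ Icc (0:ℝ) T, ∀ j ω, lam k t j ω ∈ Icc 0 lamStar)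
    (hlamMean : ∀ k, ∀ t ∈ Icc (0:ℝ) T, ∀ j, ∫ ω, lam k t j ω ∂(P k) = lam0 t)
    (hYIndep : ∀ k, ∀ t ∈ Icc (0:ℝ) T,
      iIndepFun (Y k t) (P k))
    (hYLaw : ∀ k, ∀ t ∈ Icc (0:ℝ) T, ∀ j x, ((P k) {ω | Y k t j ω = x}).toReal =
      ∑ y : Grid d (ns k + 1),
        (cellAvg d (ns k + 1) I₀ y / ∑ z : Grid d (ns k + 1), cellAvg d (ns k + 1) I₀ z) *
          heatKer d (ns k + 1) νI 0 t y x)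
    (hfamIndep : ∀ k, ∀ t ∈ Icc (0:ℝ) T,
      IndepFun (fun ω j => lam k t j ω) (fun ω j => Y k t j ω) (P k)) :
    Tendsto (fun k =>
      ⨆ t ∈ Icc (0:ℝ) T, ∫ ω, (⨆ x : Grid d (ns k + 1),
        |(N k : ℝ)⁻¹ * (∑ j, lam k t j ω * (if Y k t j ω = x then (1:ℝ) else 0))
          - lam0 t * ∑ y : Grid d (ns k + 1),
              cellAvg d (ns k + 1) I₀ y * heatKer d (ns k + 1) νI 0 t y x| ^ 2) ∂(P k))
      atTop (nhds 0) := by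
  set J := ∫ y in univ.pi (fun _ : Fin d => Ico (0:ℝ) 1), I₀ y
  have hmass : ∀ k, ∑ x : Grid d (ns k + 1), cellAvg d (ns k + 1) I₀ x
      = ((ns k : ℝ) + 1) ^ d * J := fun k => by
    rw [sum_cellAvg ((hI₀c.continuousOn.integrableOn_compact isCompact_Icc).mono_set
      fun y hy => ⟨fun i => (hy i trivial).1, fun i => (hy i trivial).2.le⟩)]
    push_cast
    rfl
  have hbound := (tendsto_add_one_div_sq_of_abs_sub_mul_le (a := fun k => ((ns k : ℝ) + 1) ^ d * J)
    hN ((hNeps.atTop_div_const hI₀pos).congr fun k => div_div _ _ _)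
    (by simpa only [hmass] using hm)).const_mul (lamStar ^ 2)
  rw [mul_zero] at hbound
  have habs : ∀ {s}, s ∈ Icc 0 lamStar → |s| ≤ lamStar := fun h => (abs_of_nonneg h.1).trans_le h.2
  refine squeeze_zero' (Eventually.of_forall fun k => ?_) ?_ hbound
  · exact Real.iSup_nonneg fun t => Real.iSup_nonneg fun _ =>
      integral_nonneg fun ω => Real.iSup_nonneg fun x => by positivity
  filter_upwards [hN.eventually_gt_atTop J⁻¹] with k hk
  have hNpos : (0 : ℝ) < N k := (inv_pos.2 hI₀pos).trans hk
  have hmpos : 0 < m k := by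
    have := (inv_lt_iff_one_lt_mul₀ hI₀pos).1 hk
    have := one_le_pow₀ (M₀ := ℝ) (n := d) (le_add_of_nonneg_left (Nat.cast_nonneg (ns k)))
    have := (abs_le.1 (hm k)).1
    rw [hmass] at this
    exact_mod_cast (show (0 : ℝ) < m k by nlinarith)
  have : Nonempty (Fin (m k)) := ⟨⟨0, hmpos⟩⟩
  have hS : ∑ x : Grid d (ns k + 1), cellAvg d (ns k + 1) I₀ x ≠ 0 := by rw [hmass]; positivity
  refine Real.iSup_le (fun t => Real.iSup_le (fun ht => ?_) (by positivity)) (by positivity)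
  exact (integral_iSup_sq_weightedCount_sub_le (hlamIndep k t ht) (hYIndep k t ht)
    (hfamIndep k t ht) (hlamMeas k t ht) (hYMeas k t ht) (fun j ω => habs (hlamBound k t ht j ω))
    (hlamMean k t ht) (habs (hlam0b t)) (hYLaw k t ht) hNpos.ne'
    (by simpa only [Fintype.card_fin] using hm k) fun x => sum_mul_eq_mul_sum_div_mul hS _).trans_eq
    (by rw [Fintype.card_fin, mul_div_assoc])

/-- Lemma `ff0`: law of large numbers, uniform in space and in
`t ∈ [0,T]`, for the initial infectivity process, along any sequence with `N_k → ∞`,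
`ε_k = 1/n_k → 0` and `N_k ε_k^d → ∞`.  Here the grid size is `n_k = ns k + 1 ≥ 1`. -/
theorem initial_infectivity_LLN
    (d : ℕ) (hd : 1 ≤ d) (νI lamStar C₀ T : ℝ)
    (hν : 0 < νI) (hls : 0 < lamStar) (hC₀ : 0 < C₀) (hT : 0 < T)
    (I₀ : (Fin d → ℝ) → ℝ) (hI₀c : Continuous I₀)
    (hI₀per : ∀ y i, I₀ (Function.update y i (y i + 1)) = I₀ y)
    (hI₀b : ∀ y, I₀ y ∈ Icc 0 C₀)
    (hI₀pos : 0 < ∫ y in Set.univ.pi (fun _ : Fin d => Ico (0:ℝ) 1), I₀ y)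
    (lam0 : ℝ → ℝ) (hlam0m : Measurable lam0) (hlam0b : ∀ t, lam0 t ∈ Icc 0 lamStar)
    (ns N m : ℕ → ℕ)
    (hN : Tendsto (fun k => (N k : ℝ)) atTop atTop)
    (hns : Tendsto (fun k => (ns k : ℝ)) atTop atTop)
    (hNeps : Tendsto (fun k => (N k : ℝ) / ((ns k : ℝ) + 1) ^ d) atTop atTop)
    (hm : ∀ k, |(m k : ℝ) -
      (N k : ℝ) * ∑ x : Grid d (ns k + 1), cellAvg d (ns k + 1) I₀ x| ≤ 1)
    (Ω : ℕ → Type) (mΩ : ∀ k, MeasurableSpace (Ω k)) (P : ∀ k, Measure (Ω k))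
    (hP : ∀ k, IsProbabilityMeasure (P k))
    (lam : ∀ k, ℝ → Fin (m k) → Ω k → ℝ)
    (Y : ∀ k, ℝ → Fin (m k) → Ω k → Grid d (ns k + 1))
    (hlamMeas : ∀ k, ∀ t ∈ Icc (0:ℝ) T, ∀ j, Measurable (lam k t j))
    (hYMeas : ∀ k, ∀ t ∈ Icc (0:ℝ) T, ∀ j, Measurable (Y k t j))
    (hlamIndep : ∀ k, ∀ t ∈ Icc (0:ℝ) T,
      iIndepFun (lam k t) (P k))
    (hlamIdent : ∀ k, ∀ t ∈ Icc (0:ℝ) T, ∀ i j,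
      IdentDistrib (lam k t i) (lam k t j) (P k) (P k))
    (hlamBound : ∀ k, ∀ t ∈ Icc (0:ℝ) T, ∀ j ω, lam k t j ω ∈ Icc 0 lamStar)
    (hlamMean : ∀ k, ∀ t ∈ Icc (0:ℝ) T, ∀ j, ∫ ω, lam k t j ω ∂(P k) = lam0 t)
    (hYIndep : ∀ k, ∀ t ∈ Icc (0:ℝ) T,
      iIndepFun (Y k t) (P k))
    (hYLaw : ∀ k, ∀ t ∈ Icc (0:ℝ) T, ∀ j x, ((P k) {ω | Y k t j ω = x}).toReal =
      ∑ y : Grid d (ns k + 1),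
        (cellAvg d (ns k + 1) I₀ y / ∑ z : Grid d (ns k + 1), cellAvg d (ns k + 1) I₀ z) *
          heatKer d (ns k + 1) νI 0 t y x)
    (hfamIndep : ∀ k, ∀ t ∈ Icc (0:ℝ) T,
      IndepFun (fun ω j => lam k t j ω) (fun ω j => Y k t j ω) (P k)) :
    Tendsto (fun k =>
      ⨆ t ∈ Icc (0:ℝ) T, ∫ ω, (⨆ x : Grid d (ns k + 1),
        |(N k : ℝ)⁻¹ * (∑ j, lam k t j ω * (if Y k t j ω = x then (1:ℝ) else 0))
          - lam0 t * ∑ y : Grid d (ns k + 1),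
              cellAvg d (ns k + 1) I₀ y * heatKer d (ns k + 1) νI 0 t y x| ^ 2) ∂(P k))
      atTop (nhds 0) :=
  initial_infectivity_LLN_general d νI lamStar T I₀ hI₀c hI₀pos lam0 hlam0b ns N m hN hNeps hm Ω mΩ
    P hP lam Y hlamMeas hYMeas hlamIndep hlamBound hlamMean hYIndep hYLaw hfamIndep
end

section
/- Let S̄₀ : T^d → ℝ be continuous with c₀ ≤ S̄₀ ≤ C₀ (0 < c₀ ≤ C₀); set S̄^ε(0,x) := ε^{−d} ∫_{V_ε(x)} S̄₀(y)dy and S̄^ε(0) := Σ_{x ∈ D_ε} S̄^ε(0,x). Let N ≥ 1, let M ∈ ℕ satisfy |M − N S̄^ε(0)| ≤ 1, and let X₁, …, X_M be i.i.d. D_ε-valued random variables with P(X_j = x) = S̄^ε(0,x)/S̄^ε(0). Define S̄^{N,ε}(0,x) := N^{−1} Σ_{j=1}^M 1_{X_j = x}. Then there exist constants C', C'' depending only on c₀, C₀ and d such that E[ sup_{x ∈ D_ε} |S̄^{N,ε}(0,x) − S̄^ε(0,x)|² ] ≤ C'/(N ε^d) + C'' ε^d/N². In particular, this expectation tends to 0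 along any sequence (N, ε) with N → ∞, ε → 0 and N ε^d → ∞. -/
open MeasureTheory ProbabilityTheory Set

/-!
For a fixed site `x` the occupation number `K x = ∑ j, 1{X j = x}` is a sum of `M` independent
Bernoulli variables of parameter `p x = S̄^ε(0,x) / S̄^ε(0)`, so by the bias–variance decomposition
`E (K x / N - S̄^ε(0,x))² = M p x (1 - p x) / N² + (M / N - S̄^ε(0))² (p x)²`.
Bounding the supremum over sites by the sum and using `∑ p x = 1`, `|M - N S̄^ε(0)| ≤ 1` and
`p x ≤ C₀ ε^d / c₀` (cell averages lie in `[c₀, C₀]`), the expectation is at most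
`M / N² + C₀ ε^d / (c₀ N²)`, while `M ≤ N (C₀ + 1) ε^{-d}`.
-/

lemma volume_cell (d n : ℕ) [NeZero n] (x : Grid d n) :
    volume (cell d n x) = ENNReal.ofReal ((n : ℝ)⁻¹ ^ d) := by
  simp only [cell, volume_pi_pi, Real.volume_Ico, add_div, add_sub_cancel_left, one_div,
    Finset.prod_const, Finset.card_univ, Fintype.card_fin]
  rw [ENNReal.ofReal_pow (by positivity)]

lemma cellAvg_eq_setAverage (d n : ℕ) [NeZero n] (f : (Fin d → ℝ) → ℝ) (x : Grid d n) :
    cellAvg d n f x = ⨍ y in cell d n x, f y := by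
  rw [setAverage_eq, measureReal_def, volume_cell, ENNReal.toReal_ofReal (by positivity),
    inv_pow, inv_inv, smul_eq_mul, cellAvg]

lemma cellAvg_mem_Icc {d n : ℕ} [NeZero n] {f : (Fin d → ℝ) → ℝ} {x : Grid d n} {a b : ℝ}
    (hf : IntegrableOn f (cell d n x)) (hab : ∀ y ∈ cell d n x, f y ∈ Icc a b) :
    cellAvg d n f x ∈ Icc a b := by
  rw [cellAvg_eq_setAverage]
  refine (convex_Icc a b).set_average_mem isClosed_Icc ?_ ?_ ?_ hf
  · simp only [volume_cell, ne_eq, ENNReal.ofReal_eq_zero, not_le]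
    exact pow_pos (inv_pos.mpr (Nat.cast_pos.mpr (NeZero.pos n))) d
  · simp [volume_cell]
  · exact ae_restrict_of_forall_mem (MeasurableSet.univ_pi fun _ => measurableSet_Ico) hab

lemma Continuous.integrableOn_cell {d n : ℕ} {f : (Fin d → ℝ) → ℝ} (hf : Continuous f)
    (x : Grid d n) : IntegrableOn f (cell d n x) :=
  (hf.continuousOn.integrableOn_compact (isCompact_univ_pi fun _ => isCompact_Icc)).mono_set
    (pi_mono fun _ _ => Ico_subset_Icc_self)

lemma sum_grid_mem_Icc {d n : ℕ} [NeZero n] {g : Grid d n → ℝ} {a b : ℝ}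
    (hg : ∀ x, g x ∈ Icc a b) : ∑ x, g x ∈ Icc ((n : ℝ) ^ d * a) ((n : ℝ) ^ d * b) := by
  have hlow := Finset.card_nsmul_le_sum Finset.univ g a fun x _ => (hg x).1
  have hup := Finset.sum_le_card_nsmul Finset.univ g b fun x _ => (hg x).2
  simp only [Finset.card_univ, Fintype.card_pi, ZMod.card, Finset.prod_const, Fintype.card_fin,
    nsmul_eq_mul, Nat.cast_pow] at hlow hup
  exact ⟨hlow, hup⟩

lemma integral_iSup_le_sum_integral {Ω α : Type*} [MeasurableSpace Ω] {P : Measure Ω}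
    [Fintype α] {f : α → Ω → ℝ} (hf0 : ∀ x ω, 0 ≤ f x ω) (hf : ∀ x, Integrable (f x) P) :
    ∫ ω, ⨆ x, f x ω ∂P ≤ ∑ x, ∫ ω, f x ω ∂P := by
  rw [← integral_finsetSum _ fun x _ => hf x]
  exact integral_mono_of_nonneg (ae_of_all _ fun ω => Real.iSup_nonneg fun x => hf0 x ω)
    (integrable_finsetSum _ fun x _ => hf x)
    (ae_of_all _ fun ω => Real.iSup_le (fun x => Finset.single_le_sum (fun y _ => hf0 y ω)
      (Finset.mem_univ x)) (Finset.sum_nonneg fun y _ => hf0 y ω))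

lemma sum_sq_le_of_sum_eq_one {α : Type*} [Fintype α] {p : α → ℝ} {q : ℝ}
    (hp0 : ∀ x, 0 ≤ p x) (hpq : ∀ x, p x ≤ q) (hp1 : ∑ x, p x = 1) : ∑ x, p x ^ 2 ≤ q :=
  calc ∑ x, p x ^ 2 ≤ ∑ x, p x * q :=
        Finset.sum_le_sum fun x _ => by rw [sq]; exact mul_le_mul_of_nonneg_left (hpq x) (hp0 x)
    _ = q := by rw [← Finset.sum_mul, hp1, one_mul]

section Moments

variable {Ω : Type*} [MeasurableSpace Ω] {P : Measure Ω} [IsProbabilityMeasure P]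

lemma integral_sq_sub_const {Y : Ω → ℝ} (hY : MemLp Y 2 P) (a : ℝ) :
    ∫ ω, (Y ω - a) ^ 2 ∂P = Var[Y; P] + (P[Y] - a) ^ 2 := by
  have h := variance_eq_sub (X := fun ω => Y ω - a) (hY.sub (memLp_const a))
  rw [variance_sub_const hY.aestronglyMeasurable, integral_sub (hY.integrable one_le_two)
    (integrable_const a), integral_const, probReal_univ, one_smul] at h
  rw [h]
  simp only [Pi.pow_apply]
  ring

lemma variance_indicator_one {s : Set Ω} (hs : MeasurableSet s) :
    Var[s.indicator 1; P] = P.real s * (1 - P.real s) := by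
  have hL : MemLp (s.indicator (1 : Ω → ℝ)) 2 P := (memLp_const 1).indicator hs
  have hsq : s.indicator (1 : Ω → ℝ) ^ 2 = s.indicator 1 := by
    ext ω; by_cases h : ω ∈ s <;> simp [h]
  rw [variance_eq_sub hL, hsq, integral_indicator_one hs]
  ring

end Moments

lemma count_eq_sum_indicator {Ω ι α : Type*} [Fintype ι] [DecidableEq α] (X : ι → Ω → α)
    (x : α) :
    (fun ω => ∑ j, if X j ω = x then (1 : ℝ) else 0) = ∑ j, (X j ⁻¹' {x}).indicator 1 := by
  ext ω
  simp only [Finset.sum_apply]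
  refine Finset.sum_congr rfl fun j _ => ?_
  by_cases h : X j ω = x <;> simp [h]

section Occupation

variable {Ω : Type*} [MeasurableSpace Ω] {P : Measure Ω} [IsProbabilityMeasure P]
  {ι α : Type*} [Fintype ι] [MeasurableSpace α] [MeasurableSingletonClass α] [DecidableEq α]
  {X : ι → Ω → α}

lemma variance_count (hX : ∀ j, Measurable (X j)) (hindep : iIndepFun X P) (x : α) {p : ℝ}
    (hp : ∀ j, P.real (X j ⁻¹' {x}) = p) :
    Var[fun ω => ∑ j, if X j ω = x then (1 : ℝ) else 0; P] = Fintype.card ι * (p * (1 - p)) := by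
  have hA : ∀ j, MeasurableSet (X j ⁻¹' {x}) := fun j => hX j (measurableSet_singleton x)
  have hcomp : ∀ j, (X j ⁻¹' {x}).indicator (1 : Ω → ℝ) = ({x} : Set α).indicator 1 ∘ X j :=
    fun j => by ext ω; by_cases h : X j ω = x <;> simp [h]
  have hg : Measurable (({x} : Set α).indicator (1 : α → ℝ)) :=
    measurable_const.indicator (measurableSet_singleton x)
  rw [count_eq_sum_indicator, IndepFun.variance_sum (X := fun j => (X j ⁻¹' {x}).indicator 1)
    (fun j _ => (memLp_const 1).indicator (hA j))
    fun i _ j _ hij => by simp only [hcomp]; exact (hindep.indepFun hij).comp hg hg]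
  simp [variance_indicator_one (hA _), hp]

lemma integral_count (hX : ∀ j, Measurable (X j)) (x : α) {p : ℝ}
    (hp : ∀ j, P.real (X j ⁻¹' {x}) = p) :
    ∫ ω, (∑ j, if X j ω = x then (1 : ℝ) else 0) ∂P = Fintype.card ι * p := by
  have hA : ∀ j, MeasurableSet (X j ⁻¹' {x}) := fun j => hX j (measurableSet_singleton x)
  rw [count_eq_sum_indicator, Finset.sum_fn, integral_finsetSum _
    fun j _ => (integrable_const 1).indicator (hA j)]
  simp [integral_indicator_one (hA _), hp]

lemma memLp_count (hX : ∀ j, Measurable (X j)) (x : α) :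
    MemLp (fun ω => ∑ j, if X j ω = x then (1 : ℝ) else 0) 2 P := by
  rw [count_eq_sum_indicator]
  exact memLp_finsetSum' _ fun j _ => (memLp_const 1).indicator (hX j (measurableSet_singleton x))

lemma integral_sq_const_mul_count_sub (hX : ∀ j, Measurable (X j)) (hindep : iIndepFun X P)
    (x : α) {p : ℝ} (hp : ∀ j, P.real (X j ⁻¹' {x}) = p) (c a : ℝ) :
    ∫ ω, (c * (∑ j, if X j ω = x then (1 : ℝ) else 0) - a) ^ 2 ∂P
      = c ^ 2 * (Fintype.card ι * (p * (1 - p))) + (c * (Fintype.card ι * p) - a) ^ 2 := by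
  rw [integral_sq_sub_const ((memLp_count hX x).const_mul c), variance_const_mul,
    integral_const_mul, variance_count hX hindep x hp, integral_count hX x hp]

lemma sum_integral_sq_const_mul_count_sub_le [Fintype α] (hX : ∀ j, Measurable (X j))
    (hindep : iIndepFun X P) {p : α → ℝ} (hp : ∀ j x, P.real (X j ⁻¹' {x}) = p x)
    (hp1 : ∑ x, p x = 1) (c t : ℝ) :
    ∑ x, ∫ ω, (c * (∑ j, if X j ω = x then (1 : ℝ) else 0) - t * p x) ^ 2 ∂P
      ≤ c ^ 2 * Fintype.card ι + (c * Fintype.card ι - t) ^ 2 * ∑ x, p x ^ 2 := by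
  simp only [integral_sq_const_mul_count_sub hX hindep _ (fun j => hp j _)]
  calc _ ≤ ∑ x, (c ^ 2 * Fintype.card ι * p x + (c * Fintype.card ι - t) ^ 2 * p x ^ 2) :=
        Finset.sum_le_sum fun x _ => by
          nlinarith [mul_nonneg (mul_nonneg (sq_nonneg c) (Nat.cast_nonneg (Fintype.card ι)))
            (sq_nonneg (p x))]
    _ = _ := by rw [Finset.sum_add_distrib, ← Finset.mul_sum, ← Finset.mul_sum, hp1, mul_one]

end Occupation

lemma inv_sq_mul_add_sq_mul_le {M N T K C s q : ℝ} (hN : 1 ≤ N) (hK : 1 ≤ K) (hT : T ≤ K * C)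
    (hM : |M - N * T| ≤ 1) (hs0 : 0 ≤ s) (hsq : s ≤ q) :
    N⁻¹ ^ 2 * M + (N⁻¹ * M - T) ^ 2 * s ≤ (C + 1) * K / N + q / N ^ 2 := by
  have hMN : M ≤ N * (K * (C + 1)) := by
    nlinarith [(abs_le.mp hM).2, one_le_mul_of_one_le_of_one_le hN hK]
  have hbias : (N⁻¹ * M - T) ^ 2 ≤ N⁻¹ ^ 2 :=
    calc (N⁻¹ * M - T) ^ 2 = N⁻¹ ^ 2 * (M - N * T) ^ 2 := by field_simp
      _ ≤ N⁻¹ ^ 2 * 1 := by gcongr; exact (sq_le_one_iff_abs_le_one _).mpr hM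
      _ = N⁻¹ ^ 2 := mul_one _
  calc N⁻¹ ^ 2 * M + (N⁻¹ * M - T) ^ 2 * s ≤ N⁻¹ ^ 2 * (N * (K * (C + 1))) + N⁻¹ ^ 2 * q := by
        gcongr
    _ = (C + 1) * K / N + q / N ^ 2 := by field_simp

theorem initial_susceptible_density_L2_bound_general
    (d : ℕ) (c₀ C₀ : ℝ) (hc₀ : 0 < c₀) (hcC : c₀ ≤ C₀) :
    ∃ C' C'' : ℝ, 0 < C' ∧ 0 < C'' ∧
      ∀ (n : ℕ) [NeZero n],
      ∀ S₀ : (Fin d → ℝ) → ℝ, Continuous S₀ →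
        (∀ y i, S₀ (Function.update y i (y i + 1)) = S₀ y) →
        (∀ y, S₀ y ∈ Icc c₀ C₀) →
      ∀ N : ℕ, 1 ≤ N →
      ∀ M : ℕ, |(M : ℝ) - (N : ℝ) * ∑ x : Grid d n, cellAvg d n S₀ x| ≤ 1 →
      ∀ (Ω : Type) (_ : MeasurableSpace Ω) (P : Measure Ω), IsProbabilityMeasure P →
      ∀ X : Fin M → Ω → Grid d n, (∀ j, Measurable (X j)) →
        iIndepFun X P →
        (∀ j x, (P {ω | X j ω = x}).toReal =
          cellAvg d n S₀ x / ∑ y : Grid d n, cellAvg d n S₀ y) →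
      (∫ ω, (⨆ x : Grid d n,
          |(N : ℝ)⁻¹ * (∑ j, if X j ω = x then (1:ℝ) else 0) - cellAvg d n S₀ x| ^ 2) ∂P) ≤
        C' / ((N : ℝ) * ((n : ℝ)⁻¹) ^ d) + C'' * ((n : ℝ)⁻¹) ^ d / (N : ℝ) ^ 2 := by
  refine ⟨C₀ + 1, C₀ / c₀, by linarith, div_pos (hc₀.trans_le hcC) hc₀, ?_⟩
  intro n _ S₀ hcont _ hS₀ N hN M hM Ω _ P _ X hX hindep hlaw
  have hn : (1 : ℝ) ≤ n := Nat.one_le_cast.mpr NeZero.one_le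
  set a := cellAvg d n S₀
  set T := ∑ x, a x
  have ha : ∀ x, a x ∈ Icc c₀ C₀ := fun x =>
    cellAvg_mem_Icc (hcont.integrableOn_cell x) fun y _ => hS₀ y
  have hT : T ∈ Icc ((n : ℝ) ^ d * c₀) ((n : ℝ) ^ d * C₀) := sum_grid_mem_Icc ha
  have hTpos : 0 < T := lt_of_lt_of_le (by positivity) hT.1
  set p := fun x => a x / T
  have hp1 : ∑ x, p x = 1 := by rw [← Finset.sum_div, div_self hTpos.ne']
  have hsq : ∑ x, p x ^ 2 ≤ C₀ / c₀ * ((n : ℝ)⁻¹) ^ d := by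
    refine sum_sq_le_of_sum_eq_one (fun x => div_nonneg (hc₀.le.trans (ha x).1) hTpos.le)
      (fun x => ?_) hp1
    calc p x ≤ C₀ / ((n : ℝ) ^ d * c₀) :=
          div_le_div₀ (hc₀.le.trans hcC) (ha x).2 (by positivity) hT.1
      _ = C₀ / c₀ * ((n : ℝ)⁻¹) ^ d := by rw [inv_pow]; field_simp
  calc _ = ∫ ω, (⨆ x, ((N : ℝ)⁻¹ * (∑ j, if X j ω = x then (1:ℝ) else 0) - T * p x) ^ 2) ∂P := by
        simp only [sq_abs, p, mul_div_cancel₀ _ hTpos.ne']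
    _ ≤ ∑ x, ∫ ω, ((N : ℝ)⁻¹ * (∑ j, if X j ω = x then (1:ℝ) else 0) - T * p x) ^ 2 ∂P :=
        integral_iSup_le_sum_integral (fun _ _ => sq_nonneg _)
          fun x => (((memLp_count hX x).const_mul _).sub (memLp_const _)).integrable_sq
    _ ≤ ((N : ℝ)⁻¹) ^ 2 * M + ((N : ℝ)⁻¹ * M - T) ^ 2 * ∑ x, p x ^ 2 := by
        simpa only [Fintype.card_fin] using
          sum_integral_sq_const_mul_count_sub_le hX hindep hlaw hp1 (N : ℝ)⁻¹ T
    _ ≤ (C₀ + 1) * (n : ℝ) ^ d / N + C₀ / c₀ * ((n : ℝ)⁻¹) ^ d / (N : ℝ) ^ 2 :=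
        inv_sq_mul_add_sq_mul_le (Nat.one_le_cast.mpr hN) (one_le_pow₀ hn) hT.2 hM
          (Finset.sum_nonneg fun x _ => sq_nonneg _) hsq
    _ = _ := by rw [inv_pow, div_mul_eq_div_div, div_inv_eq_mul]; ring

/-- Lemma `S0`: second-moment bound, uniform over sites, for the difference
between the empirical initial susceptible density and its deterministic counterpart, with
constants depending only on `c₀, C₀, d`. -/
theorem initial_susceptible_density_L2_bound
    (d : ℕ) (hd : 1 ≤ d) (c₀ C₀ : ℝ) (hc₀ : 0 < c₀) (hcC : c₀ ≤ C₀) :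
    ∃ C' C'' : ℝ, 0 < C' ∧ 0 < C'' ∧
      ∀ (n : ℕ) [NeZero n],
      ∀ S₀ : (Fin d → ℝ) → ℝ, Continuous S₀ →
        (∀ y i, S₀ (Function.update y i (y i + 1)) = S₀ y) →
        (∀ y, S₀ y ∈ Icc c₀ C₀) →
      ∀ N : ℕ, 1 ≤ N →
      ∀ M : ℕ, |(M : ℝ) - (N : ℝ) * ∑ x : Grid d n, cellAvg d n S₀ x| ≤ 1 →
      ∀ (Ω : Type) (_ : MeasurableSpace Ω) (P : Measure Ω), IsProbabilityMeasure P →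
      ∀ X : Fin M → Ω → Grid d n, (∀ j, Measurable (X j)) →
        iIndepFun X P →
        (∀ j x, (P {ω | X j ω = x}).toReal =
          cellAvg d n S₀ x / ∑ y : Grid d n, cellAvg d n S₀ y) →
      (∫ ω, (⨆ x : Grid d n,
          |(N : ℝ)⁻¹ * (∑ j, if X j ω = x then (1:ℝ) else 0) - cellAvg d n S₀ x| ^ 2) ∂P) ≤
        C' / ((N : ℝ) * ((n : ℝ)⁻¹) ^ d) + C'' * ((n : ℝ)⁻¹) ^ d / (N : ℝ) ^ 2 :=
  initial_susceptible_density_L2_bound_general d c₀ C₀ hc₀ hcC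
end
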